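/- arXiv:1412.6408 — 7 statements merged into one kernel-verified Lean document; each statement's English description precedes it below -/
import Mathlib

section
/- Let g : [a,b] → ℝ be Lipschitz with Lipschitz constant L. Then the convex envelope conv_{[a,b]} g of g on [a,b] is Lipschitz on [a,b] with Lipschitz constant at most L. -/
open Set

/-- The convex envelope of `g` on the interval `[a,b]`: the pointwise supremum of all
convex functions on `[a,b]` lying below `g` on `[a,b]`. -/
noncomputable def convEnv (a b : ℝ) (g : ℝ → ℝ) : ℝ → ℝ :=
  fun u => sSup {y : ℝ | ∃ h : ℝ → ℝ, ConvexOn ℝ (Set.Icc a b) h ∧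
    (∀ x ∈ Set.Icc a b, h x ≤ g x) ∧ y = h u}

lemma affine_convexOn (a b m c : ℝ) : ConvexOn ℝ (Set.Icc a b) (fun x => m * x + c) := by
  refine ⟨convex_Icc a b, ?_⟩
  intro x _ y _ s t hs ht hst
  simp only [smul_eq_mul]
  exact le_of_eq (by linear_combination (-c) * hst)

theorem stmt1 (a b : ℝ) (hab : a < b) (g : ℝ → ℝ) (L : NNReal)
    (hg : LipschitzOnWith L g (Set.Icc a b)) :
    LipschitzOnWith L (convEnv a b g) (Set.Icc a b) := by
  have hL : (0:ℝ) ≤ (L:ℝ) := L.2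
  -- Lipschitz bound for g in convenient form
  have hgl : ∀ x ∈ Icc a b, ∀ y ∈ Icc a b, g x - g y ≤ (L:ℝ) * |x - y| := by
    intro x hx y hy
    have := hg.dist_le_mul x hx y hy
    rw [Real.dist_eq, Real.dist_eq] at this
    calc g x - g y ≤ |g x - g y| := le_abs_self _
    _ ≤ (L:ℝ) * |x - y| := this
  set S : ℝ → Set ℝ := fun u => {y : ℝ | ∃ h : ℝ → ℝ, ConvexOn ℝ (Set.Icc a b) h ∧
    (∀ x ∈ Set.Icc a b, h x ≤ g x) ∧ y = h u} with hSdef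
  have hE : ∀ u, convEnv a b g u = sSup (S u) := fun u => rfl
  -- nonempty
  have hne : ∀ u, (S u).Nonempty := by
    intro u
    refine ⟨g a - L * (b - a), fun _ => g a - L * (b - a), ?_, ?_, rfl⟩
    · exact convexOn_const _ (convex_Icc a b)
    · intro x hx
      have h1 := hgl a ⟨le_refl a, hab.le⟩ x hx
      have h2 : |a - x| ≤ b - a := by
        rw [abs_sub_comm, abs_of_nonneg (by linarith [hx.1])]
        linarith [hx.2]
      show g a - (L:ℝ) * (b - a) ≤ g x
      nlinarith [mul_le_mul_of_nonneg_left h2 hL]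
  -- bounded above
  have hbdd : ∀ u ∈ Icc a b, BddAbove (S u) := by
    intro u hu
    refine ⟨g u, fun y hy => ?_⟩
    obtain ⟨h, _, hle, rfl⟩ := hy
    exact hle u hu
  -- membership bound
  have hmem : ∀ u ∈ Icc a b, ∀ h : ℝ → ℝ, ConvexOn ℝ (Icc a b) h →
      (∀ x ∈ Icc a b, h x ≤ g x) → h u ≤ convEnv a b g u := by
    intro u hu h hc hle
    exact le_csSup (hbdd u hu) ⟨h, hc, hle, rfl⟩
  -- key estimates, for u ≤ v
  have key : ∀ u ∈ Icc a b, ∀ v ∈ Icc a b, u ≤ v → ∀ h : ℝ → ℝ,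
      ConvexOn ℝ (Icc a b) h → (∀ x ∈ Icc a b, h x ≤ g x) →
      h v ≤ convEnv a b g u + L * (v - u) ∧ h u ≤ convEnv a b g v + L * (v - u) := by
    intro u hu v hv huv h hc hle
    constructor
    · -- h v ≤ E u + L (v - u)
      by_cases hcase : h v ≤ h u + L * (v - u)
      · have := hmem u hu h hc hle; linarith
      · push_neg at hcase
        have huv' : u < v := by
          rcases lt_or_eq_of_le huv with h' | h'
          · exact h'
          · exfalso; rw [h'] at hcase; simp at hcase
        -- new function: max of h and the line of slope L through (v, h v)
        set ℓ : ℝ → ℝ := fun x => (L:ℝ) * x + (h v - L * v) with hl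
        have hc' : ConvexOn ℝ (Icc a b) (h ⊔ ℓ) := hc.sup (affine_convexOn a b _ _)
        have hle' : ∀ x ∈ Icc a b, (h ⊔ ℓ) x ≤ g x := by
          intro x hx
          have hhx := hle x hx
          have hlx : ℓ x ≤ g x := by
            by_cases hxv : x ≤ v
            · -- ℓ x ≤ g v - L (v - x) ≤ g x
              have h1 := hgl v hv x hx
              have h2 : |v - x| = v - x := abs_of_nonneg (by linarith)
              have h3 := hle v hv
              simp only [hl]
              rw [h2] at h1
              linarith
            · -- x > v : use convexity slope monotonicity
              push_neg at hxv
              have hsl := hc.slope_mono_adjacent hu hx huv' hxv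
              rw [div_le_div_iff₀ (by linarith) (by linarith)] at hsl
              have hhx2 : h v + L * (x - v) ≤ h x := by nlinarith
              simp only [hl]
              linarith
          simp only [Pi.sup_apply, sup_le_iff]
          exact ⟨hhx, hlx⟩
        have := hmem u hu _ hc' hle'
        have h2 : ℓ u ≤ (h ⊔ ℓ) u := le_sup_right
        simp only [hl] at h2
        nlinarith
    · -- h u ≤ E v + L (v - u)
      by_cases hcase : h u ≤ h v + L * (v - u)
      · have := hmem v hv h hc hle; linarith
      · push_neg at hcase
        have huv' : u < v := by
          rcases lt_or_eq_of_le huv with h' | h'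
          · exact h'
          · exfalso; rw [h'] at hcase; simp at hcase
        -- new function: max of h and the line of slope -L through (u, h u)
        set ℓ : ℝ → ℝ := fun x => (-(L:ℝ)) * x + (h u + L * u) with hl
        have hc' : ConvexOn ℝ (Icc a b) (h ⊔ ℓ) := hc.sup (affine_convexOn a b _ _)
        have hle' : ∀ x ∈ Icc a b, (h ⊔ ℓ) x ≤ g x := by
          intro x hx
          have hhx := hle x hx
          have hlx : ℓ x ≤ g x := by
            by_cases hxu : u ≤ x
            · have h1 := hgl u hu x hx
              have h2 : |u - x| = x - u := by rw [abs_sub_comm]; exact abs_of_nonneg (by linarith)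
              have h3 := hle u hu
              simp only [hl]
              rw [h2] at h1
              linarith
            · push_neg at hxu
              have hsl := hc.slope_mono_adjacent hx hv hxu huv'
              rw [div_le_div_iff₀ (by linarith) (by linarith)] at hsl
              have hhx2 : h u + L * (u - x) ≤ h x := by nlinarith
              simp only [hl]
              linarith
          simp only [Pi.sup_apply, sup_le_iff]
          exact ⟨hhx, hlx⟩
        have := hmem v hv _ hc' hle'
        have h2 : ℓ v ≤ (h ⊔ ℓ) v := le_sup_right
        simp only [hl] at h2
        nlinarith
  -- assemble
  have keyE : ∀ u ∈ Icc a b, ∀ v ∈ Icc a b, u ≤ v →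
      convEnv a b g v ≤ convEnv a b g u + L * (v - u) ∧
      convEnv a b g u ≤ convEnv a b g v + L * (v - u) := by
    intro u hu v hv huv
    constructor
    · rw [hE v]
      refine csSup_le (hne v) ?_
      rintro y ⟨h, hc, hle, rfl⟩
      exact (key u hu v hv huv h hc hle).1
    · rw [hE u]
      refine csSup_le (hne u) ?_
      rintro y ⟨h, hc, hle, rfl⟩
      exact (key u hu v hv huv h hc hle).2
  apply LipschitzOnWith.of_dist_le_mul
  intro x hx y hy
  rw [Real.dist_eq, Real.dist_eq]
  rcases le_total x y with hxy | hxy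
  · obtain ⟨k1, k2⟩ := keyE x hx y hy hxy
    have hxy' : |x - y| = y - x := by rw [abs_sub_comm]; exact abs_of_nonneg (by linarith)
    rw [hxy', abs_le]
    constructor <;> linarith
  · obtain ⟨k1, k2⟩ := keyE y hy x hx hxy
    have hxy' : |x - y| = x - y := abs_of_nonneg (by linarith)
    rw [hxy', abs_le]
    constructor <;> linarith
end

section
/- Let g : [a,b] → ℝ be C¹. Then the convex envelope conv_{[a,b]} g is C¹ on [a,b] (one-sided derivatives at the endpoints), and for any interior point u ∈ (a,b) where g(u) = conv_{[a,b]} g (u), the derivatives coincide: g'(u) = (conv_{[a,b]} g)'(u). -/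
/-!
The envelope `φ = convEnv a b g` is itself the largest convex minorant of `g`. At an interior
point where `φ` touches `g`, the one-sided derivatives of `φ` are squeezed between those of `g`,
so they both equal `g'`. At an interior point where `φ < g`, a corner of `φ` would allow a line
through the corner, lifted slightly, to stay below `g`, contradicting maximality. At the endpoints
the affine minorants `g a - K (x - a)` and `g b + K (x - b)`, for a Lipschitz constant `K` of `g`,
bound the slopes of `φ`. Hence `φ` is differentiable on `[a, b]`; its derivative is monotone by
convexity and has the intermediate value property by Darboux's theorem, so it is continuous.
-/

open Set

open Filter Topology
open scoped NNReal

def IsConvexMinorant (s : Set ℝ) (g h : ℝ → ℝ) : Prop :=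
  ConvexOn ℝ s h ∧ ∀ x ∈ s, h x ≤ g x

lemma convexOn_const_add_mul_sub {s : Set ℝ} (hs : Convex ℝ s) (c q u : ℝ) :
    ConvexOn ℝ s (fun x => c + q * (x - u)) := by
  refine ⟨hs, fun x _ y _ p r _ _ hpr => le_of_eq ?_⟩
  simp only [smul_eq_mul]
  linear_combination (c - q * u) * hpr.symm

section Order

variable {α β : Type*} [LinearOrder α] [TopologicalSpace α] [OrderTopology α]
  [LinearOrder β] [DenselyOrdered β] {f : α → β} {s : Set α} {x : α}

lemma MonotoneOn.eventually_lt_of_ordConnected_image (hf : MonotoneOn f s)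
    (hs : (f '' s).OrdConnected) (hx : x ∈ s) {c : β} (hc : f x < c) :
    ∀ᶠ y in 𝓝[s] x, f y < c := by
  by_cases h : ∃ z ∈ s, f x < f z
  · obtain ⟨z, hz, hxz⟩ := h
    obtain ⟨v, hxv, hv⟩ := exists_between (lt_min hc hxz)
    obtain ⟨d, hd, rfl⟩ := hs.out (mem_image_of_mem f hx) (mem_image_of_mem f hz)
      ⟨hxv.le, (hv.trans_le (min_le_right _ _)).le⟩
    have hxd : x < d := lt_of_not_ge fun hdx => hxv.not_ge (hf hd hx hdx)
    filter_upwards [self_mem_nhdsWithin, mem_nhdsWithin_of_mem_nhds (Iio_mem_nhds hxd)]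
      with y hy hyd
    exact (hf hy hd hyd.le).trans_lt (hv.trans_le (min_le_left _ _))
  · push Not at h
    filter_upwards [self_mem_nhdsWithin] with y hy using (h y hy).trans_lt hc

lemma MonotoneOn.continuousOn_of_ordConnected_image [TopologicalSpace β] [OrderTopology β]
    (hf : MonotoneOn f s) (hs : (f '' s).OrdConnected) : ContinuousOn f s := fun _ hx =>
  tendsto_order.2 ⟨fun _ hc => hf.dual.eventually_lt_of_ordConnected_image hs.dual hx hc,
    fun _ hc => hf.eventually_lt_of_ordConnected_image hs hx hc⟩

end Order

section ConvexEnvelope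

variable {a b u : ℝ} {g h : ℝ → ℝ}

lemma le_convEnv (hh : IsConvexMinorant (Icc a b) g h) (hu : u ∈ Icc a b) :
    h u ≤ convEnv a b g u :=
  le_csSup ⟨g u, by rintro _ ⟨h', -, hh', rfl⟩; exact hh' u hu⟩ ⟨h, hh.1, hh.2, rfl⟩

lemma convEnv_le_of_forall (hne : ∃ h, IsConvexMinorant (Icc a b) g h) {c : ℝ}
    (hc : ∀ h, IsConvexMinorant (Icc a b) g h → h u ≤ c) : convEnv a b g u ≤ c := by
  obtain ⟨h, hh⟩ := hne
  exact csSup_le ⟨h u, h, hh.1, hh.2, rfl⟩ fun _ ⟨h', hc', hh', hy⟩ => hy ▸ hc h' ⟨hc', hh'⟩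

lemma isConvexMinorant_convEnv (hne : ∃ h, IsConvexMinorant (Icc a b) g h) :
    IsConvexMinorant (Icc a b) g (convEnv a b g) := by
  refine ⟨⟨convex_Icc a b, fun x hx y hy p r hp hr hpr => ?_⟩,
    fun x hx => convEnv_le_of_forall hne fun h hh => hh.2 x hx⟩
  refine convEnv_le_of_forall hne fun h hh => ?_
  calc h (p • x + r • y) ≤ p • h x + r • h y := hh.1.2 hx hy hp hr hpr
    _ ≤ p • convEnv a b g x + r • convEnv a b g y := by
      gcongr
      exacts [le_convEnv hh hx, le_convEnv hh hy]

variable {K : ℝ≥0}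

lemma isConvexMinorant_left_of_lipschitzOnWith (hg : LipschitzOnWith K g (Icc a b)) :
    IsConvexMinorant (Icc a b) g (fun x => g a + -K * (x - a)) := by
  refine ⟨convexOn_const_add_mul_sub (convex_Icc a b) _ _ _, fun x hx => ?_⟩
  have hax : a ≤ x := hx.1
  have := hg.dist_le_mul x hx a ⟨le_rfl, hax.trans hx.2⟩
  rw [Real.dist_eq, Real.dist_eq, abs_of_nonneg (sub_nonneg.2 hax)] at this
  linarith [neg_abs_le (g x - g a)]

lemma isConvexMinorant_right_of_lipschitzOnWith (hg : LipschitzOnWith K g (Icc a b)) :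
    IsConvexMinorant (Icc a b) g (fun x => g b + K * (x - b)) := by
  refine ⟨convexOn_const_add_mul_sub (convex_Icc a b) _ _ _, fun x hx => ?_⟩
  have hxb : x ≤ b := hx.2
  have := hg.dist_le_mul b ⟨hx.1.trans hxb, le_rfl⟩ x hx
  rw [Real.dist_eq, Real.dist_eq, abs_of_nonneg (sub_nonneg.2 hxb)] at this
  linarith [le_abs_self (g b - g x)]

end ConvexEnvelope

section Derivatives

variable {f g : ℝ → ℝ} {S : Set ℝ} {u f' g' : ℝ}

lemma hasDerivAt_of_hasDerivWithinAt_Iio_Ioi (hl : HasDerivWithinAt f f' (Iio u) u)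
    (hr : HasDerivWithinAt f f' (Ioi u) u) : HasDerivAt f f' u :=
  hasDerivAt_iff_tendsto_slope_left_right.2
    ⟨(hasDerivWithinAt_iff_tendsto_slope' self_notMem_Iio).1 hl,
      (hasDerivWithinAt_iff_tendsto_slope' self_notMem_Ioi).1 hr⟩

lemma le_of_hasDerivWithinAt_Ioi_of_eventuallyLE (hf : HasDerivWithinAt f f' (Ioi u) u)
    (hg : HasDerivWithinAt g g' (Ioi u) u) (hle : f ≤ᶠ[𝓝[>] u] g) (heq : f u = g u) :
    f' ≤ g' := by
  refine le_of_tendsto_of_tendsto ((hasDerivWithinAt_iff_tendsto_slope' self_notMem_Ioi).1 hf)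
    ((hasDerivWithinAt_iff_tendsto_slope' self_notMem_Ioi).1 hg) ?_
  filter_upwards [hle, self_mem_nhdsWithin] with x hx (hux : u < x)
  rw [slope_def_field, slope_def_field, heq]
  gcongr

lemma ge_of_hasDerivWithinAt_Iio_of_eventuallyLE (hf : HasDerivWithinAt f f' (Iio u) u)
    (hg : HasDerivWithinAt g g' (Iio u) u) (hle : f ≤ᶠ[𝓝[<] u] g) (heq : f u = g u) :
    g' ≤ f' := by
  refine le_of_tendsto_of_tendsto ((hasDerivWithinAt_iff_tendsto_slope' self_notMem_Iio).1 hg)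
    ((hasDerivWithinAt_iff_tendsto_slope' self_notMem_Iio).1 hf) ?_
  filter_upwards [hle, self_mem_nhdsWithin] with x hx (hxu : x < u)
  rw [slope_def_field, slope_def_field, heq, ← neg_div_neg_eq (g x - g u),
    ← neg_div_neg_eq (f x - g u)]
  gcongr
  linarith

namespace ConvexOn

lemma differentiableWithinAt_Ioi_of_bddBelow (hfc : ConvexOn ℝ S f) {x y : ℝ} (hx : x ∈ S)
    (hy : y ∈ S) (hxy : x < y) (hbdd : BddBelow (slope f x '' Ioo x y)) :
    DifferentiableWithinAt ℝ f (Ioi x) x := by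
  have hmono : MonotoneOn (slope f x) (Ioo x y) := (hfc.monotoneOn_slope_gt hx).mono
    fun z hz => ⟨hfc.1.ordConnected.out hx hy (Ioo_subset_Icc_self hz), hz.1⟩
  exact ((hasDerivWithinAt_iff_tendsto_slope' self_notMem_Ioi).2
    (hmono.tendsto_nhdsWithin_Ioo_right (nonempty_Ioo.2 hxy) hbdd)).differentiableWithinAt

lemma differentiableWithinAt_Iio_of_bddAbove (hfc : ConvexOn ℝ S f) {x y : ℝ} (hx : x ∈ S)
    (hy : y ∈ S) (hxy : x < y) (hbdd : BddAbove (slope f y '' Ioo x y)) :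
    DifferentiableWithinAt ℝ f (Iio y) y := by
  have hmono : MonotoneOn (slope f y) (Ioo x y) := (hfc.monotoneOn_slope_lt hy).mono
    fun z hz => ⟨hfc.1.ordConnected.out hx hy (Ioo_subset_Icc_self hz), hz.2⟩
  exact ((hasDerivWithinAt_iff_tendsto_slope' self_notMem_Iio).2
    (hmono.tendsto_nhdsWithin_Ioo_left (nonempty_Ioo.2 hxy) hbdd)).differentiableWithinAt

lemma hasDerivAt_of_leftDeriv_eq_rightDeriv (hfc : ConvexOn ℝ S f) (hu : u ∈ interior S)
    (h : derivWithin f (Iio u) u = derivWithin f (Ioi u) u) :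
    HasDerivAt f (derivWithin f (Ioi u) u) u :=
  hasDerivAt_of_hasDerivWithinAt_Iio_Ioi (h ▸ hfc.hasDerivWithinAt_leftDeriv_of_mem_interior hu)
    (hfc.hasDerivWithinAt_rightDeriv_of_mem_interior hu)

lemma hasDerivAt_of_le_of_eq (hfc : ConvexOn ℝ S f) (hu : u ∈ interior S)
    (hle : ∀ x ∈ S, f x ≤ g x) (heq : f u = g u) (hg : HasDerivAt g g' u) :
    HasDerivAt f g' u := by
  have hle' : f ≤ᶠ[𝓝 u] g := eventually_of_mem (mem_interior_iff_mem_nhds.1 hu) hle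
  have hR := le_of_hasDerivWithinAt_Ioi_of_eventuallyLE
    (hfc.hasDerivWithinAt_rightDeriv_of_mem_interior hu) hg.hasDerivWithinAt
    (hle'.filter_mono nhdsWithin_le_nhds) heq
  have hL := ge_of_hasDerivWithinAt_Iio_of_eventuallyLE
    (hfc.hasDerivWithinAt_leftDeriv_of_mem_interior hu) hg.hasDerivWithinAt
    (hle'.filter_mono nhdsWithin_le_nhds) heq
  have hLR := hfc.leftDeriv_le_rightDeriv_of_mem_interior hu
  convert hfc.hasDerivAt_of_leftDeriv_eq_rightDeriv hu (by linarith) using 1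
  linarith

lemma add_max_leftDeriv_rightDeriv_mul_le (hfc : ConvexOn ℝ S f) (hu : u ∈ interior S)
    {x : ℝ} (hx : x ∈ S) :
    f u + max (derivWithin f (Iio u) u * (x - u)) (derivWithin f (Ioi u) u * (x - u)) ≤ f x := by
  have hLR := hfc.leftDeriv_le_rightDeriv_of_mem_interior hu
  rcases lt_trichotomy x u with hxu | rfl | hux
  · have hL := hfc.slope_le_leftDeriv hx (interior_subset hu) hxu
      (hfc.differentiableWithinAt_Iio_of_mem_interior hu)
    rw [slope_def_field, div_le_iff₀ (sub_pos.2 hxu)] at hL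
    rw [max_eq_left (mul_le_mul_of_nonpos_right hLR (sub_nonpos.2 hxu.le))]
    linarith
  · simp
  · have hR := hfc.rightDeriv_le_slope (interior_subset hu) hx hux
      (hfc.differentiableWithinAt_Ioi_of_mem_interior hu)
    rw [slope_def_field, le_div_iff₀ (sub_pos.2 hux)] at hR
    rw [max_eq_right (mul_le_mul_of_nonneg_right hLR (sub_nonneg.2 hux.le))]
    linarith

end ConvexOn

end Derivatives

lemma IsConvexMinorant.leftDeriv_eq_rightDeriv {S : Set ℝ} {f g : ℝ → ℝ} {u : ℝ}
    (hf : IsConvexMinorant S g f) (hmax : ∀ h, IsConvexMinorant S g h → h u ≤ f u)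
    (hu : u ∈ interior S) (hlt : f u < g u) (hg : ContinuousAt g u) :
    derivWithin f (Iio u) u = derivWithin f (Ioi u) u := by
  set L := derivWithin f (Iio u) u
  set R := derivWithin f (Ioi u) u
  refine le_antisymm (hf.1.leftDeriv_le_rightDeriv_of_mem_interior hu) (not_lt.1 fun hLR => ?_)
  obtain ⟨δ, hδ, hnear⟩ :
      ∃ δ > 0, ∀ x, dist x u < δ → (f u + g u) / 2 + (L + R) / 2 * (x - u) < g x :=
    Metric.eventually_nhds_iff.1 <| ContinuousAt.eventually_lt (by fun_prop) hg
      (by rw [sub_self, mul_zero, add_zero]; linarith)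
  set ε := min ((g u - f u) / 2) ((R - L) / 2 * δ)
  have hε : 0 < ε := lt_min (by linarith) (mul_pos (by linarith) hδ)
  have hline : IsConvexMinorant S g (fun x => (f u + ε) + (L + R) / 2 * (x - u)) := by
    refine ⟨convexOn_const_add_mul_sub hf.1.1 _ _ _, fun x hx => ?_⟩
    by_cases hxu : dist x u < δ
    · linarith [hnear x hxu, min_le_left ((g u - f u) / 2) ((R - L) / 2 * δ)]
    · rw [Real.dist_eq, not_lt] at hxu
      have hsupp : f u + max (L * (x - u)) (R * (x - u)) ≤ f x :=
        hf.1.add_max_leftDeriv_rightDeriv_mul_le hu hx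
      have hεδ : ε ≤ (R - L) / 2 * |x - u| :=
        (min_le_right _ _).trans (mul_le_mul_of_nonneg_left hxu (by linarith))
      refine le_trans ?_ (hf.2 x hx)
      show f u + ε + (L + R) / 2 * (x - u) ≤ f x
      rcases le_total 0 (x - u) with hux | hxu'
      · rw [abs_of_nonneg hux] at hεδ
        linarith [le_max_right (L * (x - u)) (R * (x - u))]
      · rw [abs_of_nonpos hxu'] at hεδ
        linarith [le_max_left (L * (x - u)) (R * (x - u))]
  linarith [hmax _ hline]

section ConvexEnvelopeDerivative

variable {a b u : ℝ} {g : ℝ → ℝ} {K : ℝ≥0}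

lemma differentiableWithinAt_convEnv_left (hab : a < b) (hg : LipschitzOnWith K g (Icc a b)) :
    DifferentiableWithinAt ℝ (convEnv a b g) (Icc a b) a := by
  have hl := isConvexMinorant_left_of_lipschitzOnWith hg
  have hφ := isConvexMinorant_convEnv ⟨_, hl⟩
  refine (differentiableWithinAt_Ioi_iff_Ici.1 ?_).mono Icc_subset_Ici_self
  refine hφ.1.differentiableWithinAt_Ioi_of_bddBelow (left_mem_Icc.2 hab.le)
    (right_mem_Icc.2 hab.le) hab ⟨-K, ?_⟩
  rintro _ ⟨x, hx, rfl⟩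
  have hlx : g a + -K * (x - a) ≤ convEnv a b g x := le_convEnv hl (Ioo_subset_Icc_self hx)
  have hφa := hφ.2 a (left_mem_Icc.2 hab.le)
  rw [slope_def_field, le_div_iff₀ (sub_pos.2 hx.1)]
  linarith

lemma differentiableWithinAt_convEnv_right (hab : a < b) (hg : LipschitzOnWith K g (Icc a b)) :
    DifferentiableWithinAt ℝ (convEnv a b g) (Icc a b) b := by
  have hr := isConvexMinorant_right_of_lipschitzOnWith hg
  have hφ := isConvexMinorant_convEnv ⟨_, hr⟩
  refine (?_ : DifferentiableWithinAt ℝ (convEnv a b g) (Iio b) b).hasDerivWithinAt.Iic_of_Iio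
    |>.differentiableWithinAt.mono Icc_subset_Iic_self
  refine hφ.1.differentiableWithinAt_Iio_of_bddAbove (left_mem_Icc.2 hab.le)
    (right_mem_Icc.2 hab.le) hab ⟨K, ?_⟩
  rintro _ ⟨x, hx, rfl⟩
  have hrx : g b + K * (x - b) ≤ convEnv a b g x := le_convEnv hr (Ioo_subset_Icc_self hx)
  have hφb := hφ.2 b (right_mem_Icc.2 hab.le)
  rw [slope_def_field, div_le_iff_of_neg (sub_neg.2 hx.2)]
  linarith

lemma differentiableAt_convEnv (hne : ∃ h, IsConvexMinorant (Icc a b) g h) (hu : u ∈ Ioo a b)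
    (hg : DifferentiableAt ℝ g u) : DifferentiableAt ℝ (convEnv a b g) u := by
  have hφ := isConvexMinorant_convEnv hne
  have hu' : u ∈ interior (Icc a b) := by rwa [interior_Icc]
  rcases (hφ.2 u (Ioo_subset_Icc_self hu)).lt_or_eq with hlt | heq
  · have hmax : ∀ h, IsConvexMinorant (Icc a b) g h → h u ≤ convEnv a b g u :=
      fun _ hh => le_convEnv hh (Ioo_subset_Icc_self hu)
    exact (hφ.1.hasDerivAt_of_leftDeriv_eq_rightDeriv hu'
      (hφ.leftDeriv_eq_rightDeriv hmax hu' hlt hg.continuousAt)).differentiableAt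
  · exact (hφ.1.hasDerivAt_of_le_of_eq hu' hφ.2 heq hg.hasDerivAt).differentiableAt

lemma differentiableOn_convEnv (hab : a < b) (hg : LipschitzOnWith K g (Icc a b))
    (hgd : DifferentiableOn ℝ g (Icc a b)) : DifferentiableOn ℝ (convEnv a b g) (Icc a b) := by
  intro u hu
  rcases eq_endpoints_or_mem_Ioo_of_mem_Icc hu with rfl | rfl | hu'
  · exact differentiableWithinAt_convEnv_left hab hg
  · exact differentiableWithinAt_convEnv_right hab hg
  · exact (differentiableAt_convEnv ⟨_, isConvexMinorant_left_of_lipschitzOnWith hg⟩ hu'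
      (hgd.differentiableAt (Icc_mem_nhds hu'.1 hu'.2))).differentiableWithinAt

end ConvexEnvelopeDerivative

theorem stmt2 (a b : ℝ) (hab : a < b) (g : ℝ → ℝ)
    (hg : ContDiffOn ℝ 1 g (Set.Icc a b)) :
    ∃ m : ℝ → ℝ, ContinuousOn m (Set.Icc a b) ∧
      (∀ u ∈ Set.Icc a b, HasDerivWithinAt (convEnv a b g) (m u) (Set.Icc a b) u) ∧
      ∀ u ∈ Set.Ioo a b, convEnv a b g u = g u →
        m u = derivWithin g (Set.Icc a b) u := by
  obtain ⟨K, hK⟩ := hg.exists_lipschitzOnWith one_ne_zero (convex_Icc a b) isCompact_Icc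
  have hgd : DifferentiableOn ℝ g (Icc a b) := hg.differentiableOn one_ne_zero
  have hφ := isConvexMinorant_convEnv ⟨_, isConvexMinorant_left_of_lipschitzOnWith hK⟩
  have hdiff := differentiableOn_convEnv hab hK hgd
  refine ⟨derivWithin (convEnv a b g) (Icc a b),
    (hφ.1.monotoneOn_derivWithin hdiff).continuousOn_of_ordConnected_image
      (ordConnected_Icc.image_derivWithin hdiff),
    fun u hu => (hdiff u hu).hasDerivWithinAt, fun u hu hgu => ?_⟩
  have hnhds : Icc a b ∈ 𝓝 u := Icc_mem_nhds hu.1 hu.2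
  rw [derivWithin_of_mem_nhds hnhds, derivWithin_of_mem_nhds hnhds]
  exact (hφ.1.hasDerivAt_of_le_of_eq (by rwa [interior_Icc]) hφ.2 hgu
    (hgd.differentiableAt hnhds).hasDerivAt).deriv
end

section
/- Let g : [a,b] → ℝ be C^{1,1}, i.e. differentiable with g' Lipschitz of constant M. Then the convex envelope conv_{[a,b]} g is C^{1,1} on [a,b] and the Lipschitz constant of its derivative is at most M. -/
/-
For `x ∈ [a, b]` let `m x` be a one-sided derivative of the envelope `f`, a slope of a supporting
line `ℓ` of `f` at `x`. Everything follows from the quadratic upper bound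
`f y ≤ f x + m x * (y - x) + M / 2 * (y - x) ^ 2`: squeezed against `ℓ ≤ f` it gives
`f' = m`, and adding it at `(x, y)` and `(y, x)` makes `m` `M`-Lipschitz.

For the bound, let `z` be the contact point of `ℓ` with `g` farthest from `x` in the direction
of `y`; contact points exist because a line strictly below `g` on one side of `x` could be
tilted strictly below `g` everywhere and then raised above `f x`. Between `x` and `z`, `f = ℓ`
by convexity. Beyond `z`, `f ≤ g ≤ g z + g' z * (y - z) + M / 2 * (y - z) ^ 2`, and `g' z` is
no steeper than `ℓ` towards `y`: by Fermat's rule when `[a, b]` extends past `z` on the other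
side, and otherwise `z = x` is an endpoint, where a steeper `g' x` would let `ℓ` be tilted
while staying below `g`, contradicting the extremality of the one-sided derivative `m x`.
-/

open Set

open scoped NNReal

def IsSupportSlope (s : Set ℝ) (f : ℝ → ℝ) (x m : ℝ) : Prop :=
  ∀ z ∈ s, f x + m * (z - x) ≤ f z

namespace IsSupportSlope

variable {s : Set ℝ} {f : ℝ → ℝ} {x m z : ℝ}

theorem slope_le (h : IsSupportSlope s f x m) (hz : z ∈ s) (hzx : z < x) : slope f x z ≤ m := by
  rw [slope_def_field, div_le_iff_of_neg (sub_neg.2 hzx)]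
  linarith [h z hz]

theorem le_slope (h : IsSupportSlope s f x m) (hz : z ∈ s) (hxz : x < z) : m ≤ slope f x z := by
  rw [slope_def_field, le_div_iff₀ (sub_pos.2 hxz)]
  linarith [h z hz]

theorem of_slope (hl : ∀ z ∈ s, z < x → slope f x z ≤ m) (hr : ∀ z ∈ s, x < z → m ≤ slope f x z) :
    IsSupportSlope s f x m := by
  intro z hz
  rcases lt_trichotomy z x with hzx | rfl | hxz
  · have := hl z hz hzx
    rw [slope_def_field, div_le_iff_of_neg (sub_neg.2 hzx)] at this
    linarith
  · simp
  · have := hr z hz hxz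
    rw [slope_def_field, le_div_iff₀ (sub_pos.2 hxz)] at this
    linarith

theorem hasDerivWithinAt {C : ℝ} (h : IsSupportSlope s f x m)
    (hC : ∀ y ∈ s, f y ≤ f x + m * (y - x) + C * (y - x) ^ 2) : HasDerivWithinAt f m s x := by
  rw [hasDerivWithinAt_iff_isLittleO]
  refine Asymptotics.IsBigO.trans_isLittleO (g := fun y => ‖y - x‖ ^ 2) ?_
    ((Asymptotics.isLittleO_pow_sub_sub x one_lt_two).mono nhdsWithin_le_nhds)
  refine Asymptotics.IsBigO.of_bound |C| (eventually_mem_nhdsWithin.mono fun y hy => ?_)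
  have h1 := h y hy
  have h2 := hC y hy
  rw [Real.norm_eq_abs, Real.norm_eq_abs, smul_eq_mul, abs_of_nonneg (by linarith),
    Real.norm_eq_abs, sq_abs, abs_of_nonneg (sq_nonneg (y - x))]
  nlinarith [le_abs_self C, sq_nonneg (y - x)]

end IsSupportSlope

theorem lipschitzOnWith_of_isSupportSlope {s : Set ℝ} {f m : ℝ → ℝ} {M : ℝ≥0}
    (hm : ∀ x ∈ s, IsSupportSlope s f x (m x))
    (hquad : ∀ x ∈ s, ∀ y ∈ s, f y ≤ f x + m x * (y - x) + M / 2 * (y - x) ^ 2) :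
    LipschitzOnWith M m s := by
  refine LipschitzOnWith.of_dist_le_mul fun p hp q hq => ?_
  have hmono : 0 ≤ (m p - m q) * (p - q) := by nlinarith [hm p hp q hq, hm q hq p hp]
  have hbound : (m p - m q) * (p - q) ≤ M * (p - q) ^ 2 := by
    nlinarith [hquad p hp q hq, hquad q hq p hp]
  rw [Real.dist_eq, Real.dist_eq]
  rcases eq_or_ne p q with rfl | hpq
  · simp
  · have hpos : 0 < |p - q| := abs_pos.2 (sub_ne_zero.2 hpq)
    refine le_of_mul_le_mul_right ?_ hpos
    rw [← abs_mul, abs_of_nonneg hmono, mul_assoc, ← sq, sq_abs]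
    exact hbound

theorem le_quadratic_of_lipschitzOnWith {s : Set ℝ} (hs : Convex ℝ s) {g g' : ℝ → ℝ} {M : ℝ≥0}
    (hg : ∀ x ∈ s, HasDerivWithinAt g (g' x) s x) (hM : LipschitzOnWith M g' s) {x y : ℝ}
    (hx : x ∈ s) (hy : y ∈ s) : g y ≤ g x + g' x * (y - x) + M / 2 * (y - x) ^ 2 := by
  have hgc : ContinuousOn g s := fun t ht => (hg t ht).continuousWithinAt
  set ψ : ℝ → ℝ := fun t => g t - g' x * t - M / 2 * (t - x) ^ 2
  have hmvt : ∀ p ∈ s, ∀ q ∈ s, p < q →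
      ∃ c ∈ Ioo p q, c ∈ s ∧ ψ q - ψ p = (g' c - g' x - M * (c - x)) * (q - p) := by
    intro p hp q hq hpq
    have hsub : Icc p q ⊆ s := hs.ordConnected.out hp hq
    have hderiv : ∀ t ∈ Ioo p q, HasDerivAt ψ (g' t - g' x - M * (t - x)) t := by
      intro t ht
      have hgt := (hg t (hsub (Ioo_subset_Icc_self ht))).hasDerivAt
        (Filter.mem_of_superset (Ioo_mem_nhds ht.1 ht.2) (Ioo_subset_Icc_self.trans hsub))
      refine ((hgt.sub ((hasDerivAt_id' t).const_mul (g' x))).sub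
        ((((hasDerivAt_id' t).sub_const x).pow 2).const_mul ((M : ℝ) / 2))).congr_deriv ?_
      push_cast
      ring
    have hcont : ContinuousOn ψ (Icc p q) :=
      ((hgc.mono hsub).sub (continuousOn_const.mul continuousOn_id)).sub (by fun_prop)
    obtain ⟨c, hc, hc'⟩ := exists_hasDerivAt_eq_slope ψ _ hpq hcont hderiv
    refine ⟨c, hc, hsub (Ioo_subset_Icc_self hc), ?_⟩
    rw [hc', div_mul_cancel₀ _ (sub_ne_zero.2 hpq.ne')]
  have hlip : ∀ c ∈ s, |g' c - g' x| ≤ M * |c - x| := fun c hc => by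
    simpa [Real.dist_eq] using hM.dist_le_mul c hc x hx
  rcases lt_trichotomy x y with hxy | rfl | hyx
  · obtain ⟨c, hc, hcs, h⟩ := hmvt x hx y hy hxy
    have := (abs_le.1 (hlip c hcs)).2
    rw [abs_of_pos (sub_pos.2 hc.1)] at this
    have : ψ y ≤ ψ x := by nlinarith [hc.1, hc.2]
    simp only [ψ] at this
    nlinarith
  · simp
  · obtain ⟨c, hc, hcs, h⟩ := hmvt y hy x hx hyx
    have := (abs_le.1 (hlip c hcs)).1
    rw [abs_of_neg (sub_neg.2 hc.2)] at this
    have : ψ y ≤ ψ x := by nlinarith [hc.1, hc.2]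
    simp only [ψ] at this
    nlinarith

theorem quadratic_le_of_lipschitzOnWith {s : Set ℝ} (hs : Convex ℝ s) {g g' : ℝ → ℝ} {M : ℝ≥0}
    (hg : ∀ x ∈ s, HasDerivWithinAt g (g' x) s x) (hM : LipschitzOnWith M g' s) {x y : ℝ}
    (hx : x ∈ s) (hy : y ∈ s) : g x + g' x * (y - x) - M / 2 * (y - x) ^ 2 ≤ g y := by
  have := le_quadratic_of_lipschitzOnWith hs (fun z hz => (hg z hz).neg)
    (LipschitzOnWith.of_dist_le_mul fun z hz w hw => by
      simpa [dist_neg_neg] using hM.dist_le_mul z hz w hw) hx hy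
  simp only [Pi.neg_apply] at this
  linarith

theorem sub_mul_nonneg_of_affine_le {s : Set ℝ} (hs : Convex ℝ s) {g : ℝ → ℝ} {d p m x z w : ℝ}
    (hz : z ∈ s) (hw : w ∈ s) (hg : HasDerivWithinAt g d s z)
    (hle : ∀ u ∈ s, p + m * (u - x) ≤ g u) (heq : g z = p + m * (z - x)) :
    0 ≤ (d - m) * (w - z) := by
  have hmin : IsMinOn (fun u => g u - (p + m * (u - x))) s z := fun u hu => by
    simp only [mem_ofPred_eq, heq, sub_self, sub_nonneg]
    exact hle u hu
  have hd : HasDerivWithinAt (fun u => g u - (p + m * (u - x))) (d - m) s z :=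
    (hg.sub ((((hasDerivAt_id' z).sub_const x).const_mul m).const_add p).hasDerivWithinAt
      ).congr_deriv (by ring)
  have hcone : w - z ∈ posTangentConeAt s z :=
    mem_posTangentConeAt_of_segment_subset (by simpa using hs.segment_subset hz hw)
  simpa [mul_comm] using hmin.localize.hasFDerivWithinAt_nonneg hd.hasFDerivWithinAt hcone

theorem exists_pos_le_slope {K : Set ℝ} {φ : ℝ → ℝ} {p c : ℝ} (hK : IsCompact K) (hp : p ∈ K)
    (hφ : ContinuousOn φ K) (hd : HasDerivWithinAt φ c K p) (hc : 0 < c)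
    (hpos : ∀ z ∈ K, z ≠ p → 0 < slope φ p z) : ∃ ε > 0, ∀ z ∈ K, z ≠ p → ε ≤ slope φ p z := by
  classical
  have hslope : ContinuousOn (slope φ p) (K \ {p}) := by
    simp_rw [slope_fun_def_field]
    exact ((hφ.mono sdiff_subset).sub continuousOn_const).div
      (continuousOn_id.sub continuousOn_const) fun z hz => sub_ne_zero.2 hz.2
  have hψ : ContinuousOn (Function.update (slope φ p) p c) K :=
    continuousOn_update_iff.2 ⟨hslope, fun _ => hasDerivWithinAt_iff_tendsto_slope.1 hd⟩
  obtain ⟨z₀, hz₀, hmin⟩ := hK.exists_isMinOn ⟨p, hp⟩ hψ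
  refine ⟨Function.update (slope φ p) p c z₀, ?_, fun z hz hzp => ?_⟩
  · rcases eq_or_ne z₀ p with rfl | hz₀p
    · simpa using hc
    · simpa [hz₀p] using hpos z₀ hz₀ hz₀p
  · simpa [hzp] using hmin hz

noncomputable def supportSlope (a b : ℝ) (f : ℝ → ℝ) (x : ℝ) : ℝ :=
  if x = a then sInf (slope f a '' Ioc a b) else sSup (slope f x '' Ico a x)

section supportSlope

variable {a b : ℝ} {f : ℝ → ℝ}

theorem isSupportSlope_supportSlope (hf : ConvexOn ℝ (Icc a b) f) {ca cb : ℝ}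
    (ha : IsSupportSlope (Icc a b) f a ca) (hb : IsSupportSlope (Icc a b) f b cb) {x : ℝ}
    (hx : x ∈ Icc a b) : IsSupportSlope (Icc a b) f x (supportSlope a b f x) := by
  rw [supportSlope]
  split_ifs with hxa
  · subst hxa
    refine IsSupportSlope.of_slope (fun z hz hzx => absurd hz.1 (not_le.2 hzx)) fun z hz hxz => ?_
    refine csInf_le ⟨ca, ?_⟩ ⟨z, ⟨hxz, hz.2⟩, rfl⟩
    rintro _ ⟨w, hw, rfl⟩
    exact ha.le_slope ⟨hw.1.le, hw.2⟩ hw.1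
  · have hax : a < x := hx.1.lt_of_ne (Ne.symm hxa)
    have hbdd : BddAbove (slope f x '' Ico a x) := by
      refine ⟨cb, ?_⟩
      rintro _ ⟨w, hw, rfl⟩
      have hwb : w < b := hw.2.trans_le hx.2
      calc slope f x w = slope f w x := slope_comm f x w
        _ ≤ slope f w b := hf.slope_mono ⟨hw.1, hwb.le⟩ ⟨hx, hw.2.ne'⟩
            ⟨right_mem_Icc.2 (hax.le.trans hx.2), hwb.ne'⟩ hx.2
        _ = slope f b w := slope_comm f w b
        _ ≤ cb := hb.slope_le ⟨hw.1, hwb.le⟩ hwb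
    refine IsSupportSlope.of_slope (fun z hz hzx => le_csSup hbdd ⟨z, ⟨hz.1, hzx⟩, rfl⟩)
      fun z hz hxz => csSup_le ⟨_, a, ⟨le_rfl, hax⟩, rfl⟩ ?_
    rintro _ ⟨w, hw, rfl⟩
    exact hf.slope_mono hx ⟨⟨hw.1, hw.2.le.trans hx.2⟩, hw.2.ne⟩ ⟨hz, hxz.ne'⟩
      (hw.2.trans hxz).le

theorem le_supportSlope_left (hab : a < b) {m : ℝ} (hm : IsSupportSlope (Icc a b) f a m) :
    m ≤ supportSlope a b f a := by
  rw [supportSlope, if_pos rfl]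
  refine le_csInf ⟨_, b, ⟨hab, le_rfl⟩, rfl⟩ ?_
  rintro _ ⟨z, hz, rfl⟩
  exact hm.le_slope ⟨hz.1.le, hz.2⟩ hz.1

theorem supportSlope_right_le (hab : a < b) {m : ℝ} (hm : IsSupportSlope (Icc a b) f b m) :
    supportSlope a b f b ≤ m := by
  rw [supportSlope, if_neg hab.ne']
  refine csSup_le ⟨_, a, ⟨le_rfl, hab⟩, rfl⟩ ?_
  rintro _ ⟨z, hz, rfl⟩
  exact hm.slope_le ⟨hz.1, hz.2.le⟩ hz.2

end supportSlope

structure IsConvexEnvelopeOn (s : Set ℝ) (g f : ℝ → ℝ) : Prop where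
  convexOn : ConvexOn ℝ s f
  le : ∀ x ∈ s, f x ≤ g x
  minorant_le : ∀ h : ℝ → ℝ, ConvexOn ℝ s h → (∀ x ∈ s, h x ≤ g x) → ∀ x ∈ s, h x ≤ f x

theorem isConvexEnvelopeOn_convEnv {a b : ℝ} {g : ℝ → ℝ} (hg : BddBelow (g '' Icc a b)) :
    IsConvexEnvelopeOn (Icc a b) g (convEnv a b g) := by
  obtain ⟨c, hc⟩ := hg
  have hne : ∀ u, {y | ∃ h : ℝ → ℝ, ConvexOn ℝ (Icc a b) h ∧
      (∀ x ∈ Icc a b, h x ≤ g x) ∧ y = h u}.Nonempty := fun u =>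
    ⟨c, fun _ => c, convexOn_const c (convex_Icc a b), fun x hx => hc ⟨x, hx, rfl⟩, rfl⟩
  have hge : ∀ h : ℝ → ℝ, ConvexOn ℝ (Icc a b) h → (∀ x ∈ Icc a b, h x ≤ g x) →
      ∀ x ∈ Icc a b, h x ≤ convEnv a b g x := fun h hh hhg x hx =>
    le_csSup ⟨g x, by rintro _ ⟨h', -, hh'g, rfl⟩; exact hh'g x hx⟩ ⟨h, hh, hhg, rfl⟩
  refine ⟨⟨convex_Icc a b, fun x hx y hy p q hp hq hpq => ?_⟩, fun x hx => ?_, hge⟩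
  · refine csSup_le (hne _) ?_
    rintro _ ⟨h, hh, hhg, rfl⟩
    calc h (p • x + q • y) ≤ p • h x + q • h y := hh.2 hx hy hp hq hpq
      _ ≤ p • convEnv a b g x + q • convEnv a b g y := by
        simp only [smul_eq_mul]
        gcongr
        · exact hge h hh hhg x hx
        · exact hge h hh hhg y hy
  · refine csSup_le (hne _) ?_
    rintro _ ⟨h, -, hhg, rfl⟩
    exact hhg x hx

namespace IsConvexEnvelopeOn

variable {s : Set ℝ} {a b : ℝ} {g g' f : ℝ → ℝ} {M : ℝ≥0}

theorem affine_le (hf : IsConvexEnvelopeOn s g f) {p c x₀ : ℝ}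
    (h : ∀ z ∈ s, p + c * (z - x₀) ≤ g z) : ∀ z ∈ s, p + c * (z - x₀) ≤ f z :=
  hf.minorant_le _ ⟨hf.convexOn.1, fun _ _ _ _ _ _ _ _ hab => le_of_eq (by
    simp only [smul_eq_mul]; linear_combination (-p + c * x₀) * hab)⟩ h

theorem affine_lt (hf : IsConvexEnvelopeOn s g f) (hs : IsCompact s) (hg : ContinuousOn g s)
    {p c x₀ x : ℝ} (h : ∀ z ∈ s, p + c * (z - x₀) < g z) (hx : x ∈ s) :
    p + c * (x - x₀) < f x := by
  have hφ : ContinuousOn (fun z => g z - (p + c * (z - x₀))) s := hg.sub (by fun_prop)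
  obtain ⟨z₀, hz₀, hmin⟩ := hs.exists_isMinOn ⟨x, hx⟩ hφ
  set δ := g z₀ - (p + c * (z₀ - x₀))
  have hδ : 0 < δ := sub_pos.2 (h z₀ hz₀)
  have := hf.affine_le (p := p + δ) (c := c) (x₀ := x₀) (fun z hz => by
    have : δ ≤ g z - (p + c * (z - x₀)) := hmin hz
    linarith) x hx
  linarith

theorem isSupportSlope_of_le (hf : IsConvexEnvelopeOn s g f) {x c : ℝ} (hx : x ∈ s)
    (h : ∀ z ∈ s, g x + c * (z - x) ≤ g z) : IsSupportSlope s f x c := by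
  have hle := hf.affine_le h
  have hfx : f x = g x := le_antisymm (hf.le x hx) (by simpa using hle x hx)
  rwa [← hfx] at hle

theorem isSupportSlope_left (hf : IsConvexEnvelopeOn (Icc a b) g f) (hab : a ≤ b)
    (hg : ∀ x ∈ Icc a b, HasDerivWithinAt g (g' x) (Icc a b) x)
    (hM : LipschitzOnWith M g' (Icc a b)) :
    IsSupportSlope (Icc a b) f a (g' a - M / 2 * (b - a)) :=
  hf.isSupportSlope_of_le (left_mem_Icc.2 hab) fun z hz => by
    have := quadratic_le_of_lipschitzOnWith (convex_Icc a b) hg hM (left_mem_Icc.2 hab) hz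
    nlinarith [mul_nonneg (mul_nonneg (sub_nonneg.2 hz.1) (sub_nonneg.2 hz.2)) M.coe_nonneg]

theorem isSupportSlope_right (hf : IsConvexEnvelopeOn (Icc a b) g f) (hab : a ≤ b)
    (hg : ∀ x ∈ Icc a b, HasDerivWithinAt g (g' x) (Icc a b) x)
    (hM : LipschitzOnWith M g' (Icc a b)) :
    IsSupportSlope (Icc a b) f b (g' b + M / 2 * (b - a)) :=
  hf.isSupportSlope_of_le (right_mem_Icc.2 hab) fun z hz => by
    have := quadratic_le_of_lipschitzOnWith (convex_Icc a b) hg hM (right_mem_Icc.2 hab) hz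
    nlinarith [mul_nonneg (mul_nonneg (sub_nonneg.2 hz.1) (sub_nonneg.2 hz.2)) M.coe_nonneg]

theorem exists_contact (hf : IsConvexEnvelopeOn (Icc a b) g f) (hg : ContinuousOn g (Icc a b))
    {x y m : ℝ} (hx : x ∈ Icc a b) (hy : y ∈ Icc a b)
    (hℓ : ∀ z ∈ Icc a b, f x + m * (z - x) ≤ g z) :
    ∃ z ∈ Icc a b, 0 ≤ (y - x) * (z - x) ∧ g z = f x + m * (z - x) := by
  by_contra! hno
  set K := {z ∈ Icc a b | 0 ≤ (y - x) * (z - x)}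
  have hK : IsCompact K :=
    isCompact_Icc.of_isClosed_subset (isClosed_Icc.inter (isClosed_le continuous_const
      (by fun_prop : Continuous fun z => (y - x) * (z - x)))) (sep_subset _ _)
  have hφ : ContinuousOn (fun z => g z - (f x + m * (z - x))) K :=
    (hg.mono (sep_subset _ _)).sub (by fun_prop)
  obtain ⟨z₀, hz₀, hmin⟩ := hK.exists_isMinOn ⟨x, hx, by simp⟩ hφ
  set δ := g z₀ - (f x + m * (z₀ - x))
  have hδ : 0 < δ := sub_pos.2 ((hℓ z₀ hz₀.1).lt_of_ne (hno z₀ hz₀.1 hz₀.2).symm)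
  set ε := δ / ((b - a) ^ 2 + 1)
  have hε : 0 < ε := by positivity
  -- tilting the line towards `y` keeps it strictly below `g`
  have htilt : ∀ z ∈ Icc a b, f x + (m + ε * (y - x)) * (z - x) < g z := by
    intro z hz
    rcases le_or_gt 0 ((y - x) * (z - x)) with hside | hside
    · have hδz : δ ≤ g z - (f x + m * (z - x)) := hmin ⟨hz, hside⟩
      have hbound : (y - x) * (z - x) ≤ (b - a) ^ 2 := by
        nlinarith [hx.1, hx.2, hy.1, hy.2, hz.1, hz.2]
      have hεδ : ε * ((b - a) ^ 2 + 1) = δ := div_mul_cancel₀ _ (by positivity)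
      nlinarith
    · nlinarith [hℓ z hz]
  simpa using hf.affine_lt isCompact_Icc hg htilt hx

theorem exists_extremal_contact (hf : IsConvexEnvelopeOn (Icc a b) g f)
    (hg : ContinuousOn g (Icc a b)) {x y m : ℝ} (hx : x ∈ Icc a b) (hy : y ∈ Icc a b)
    (hℓ : ∀ z ∈ Icc a b, f x + m * (z - x) ≤ g z) :
    ∃ z ∈ Icc a b, 0 ≤ (y - x) * (z - x) ∧ g z = f x + m * (z - x) ∧
      ∀ w ∈ Icc a b, 0 ≤ (y - x) * (w - x) → g w = f x + m * (w - x) →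
        (y - x) * (w - x) ≤ (y - x) * (z - x) := by
  set C := {w ∈ Icc a b | 0 ≤ (y - x) * (w - x) ∧ g w = f x + m * (w - x)}
  have hC : IsClosed C := by
    have : C = (Icc a b ∩ (fun w => g w - (f x + m * (w - x))) ⁻¹' {0}) ∩
        {w | 0 ≤ (y - x) * (w - x)} := by
      ext w
      simp only [C, mem_inter_iff, mem_preimage, mem_singleton_iff, sub_eq_zero, mem_ofPred_eq]
      tauto
    rw [this]
    exact (ContinuousOn.preimage_isClosed_of_isClosed (hg.sub (by fun_prop)) isClosed_Icc
      isClosed_singleton).inter (isClosed_le (by fun_prop) (by fun_prop))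
  obtain ⟨z₀, hz₀, hz₀side, hz₀c⟩ := hf.exists_contact hg hx hy hℓ
  obtain ⟨z, ⟨hz, hzside, hzc⟩, hmax⟩ :=
    (isCompact_Icc.of_isClosed_subset hC (sep_subset _ _)).exists_isMaxOn ⟨z₀, hz₀, hz₀side, hz₀c⟩
      (f := fun w => (y - x) * (w - x)) (by fun_prop)
  exact ⟨z, hz, hzside, hzc, fun w hw hwside hwc => hmax ⟨hw, hwside, hwc⟩⟩

theorem exists_steeper_isSupportSlope (hf : IsConvexEnvelopeOn (Icc a b) g f)
    (hg : ContinuousOn g (Icc a b)) {x m d v : ℝ} (hx : x ∈ Icc a b)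
    (hgx : HasDerivWithinAt g d (Icc a b) x) (hfx : f x = g x)
    (hside : ∀ w ∈ Icc a b, 0 ≤ v * (w - x))
    (hiso : ∀ w ∈ Icc a b, w ≠ x → f x + m * (w - x) < g w) (hd : 0 < v * (d - m)) :
    ∃ m', 0 < (m' - m) * v ∧ IsSupportSlope (Icc a b) f x m' := by
  set φ : ℝ → ℝ := fun w => v * (g w - (f x + m * (w - x)))
  have hv : v ≠ 0 := by rintro rfl; simp at hd
  have hφx : φ x = 0 := by simp [φ, hfx]
  have hφ : HasDerivWithinAt φ (v * (d - m)) (Icc a b) x :=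
    ((hgx.sub ((((hasDerivAt_id' x).sub_const x).const_mul m).const_add (f x)).hasDerivWithinAt
      ).const_mul v).congr_deriv (by ring)
  have hvw : ∀ w ∈ Icc a b, w ≠ x → 0 < v * (w - x) := fun w hw hwx =>
    (hside w hw).lt_of_ne (mul_ne_zero hv (sub_ne_zero.2 hwx)).symm
  have hslope : ∀ w ∈ Icc a b, w ≠ x →
      slope φ x w * (v * (w - x)) = v ^ 2 * (g w - (f x + m * (w - x))) := fun w _ hwx => by
    rw [slope_def_field, hφx]
    field_simp [sub_ne_zero.2 hwx]
    ring
  have hφc : ContinuousOn φ (Icc a b) := continuousOn_const.mul (hg.sub (by fun_prop))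
  obtain ⟨ε, hε, hεle⟩ := exists_pos_le_slope isCompact_Icc hx hφc hφ hd fun w hw hwx => by
    have hG : 0 < v ^ 2 * (g w - (f x + m * (w - x))) :=
      mul_pos (by positivity) (sub_pos.2 (hiso w hw hwx))
    by_contra! h
    nlinarith [hslope w hw hwx, hvw w hw hwx]
  refine ⟨m + ε / v, by rw [add_sub_cancel_left, div_mul_cancel₀ _ hv]; exact hε,
    hf.affine_le fun w hw => ?_⟩
  rcases eq_or_ne w x with rfl | hwx
  · simpa using hf.le w hw
  · have hP := hvw w hw hwx
    have h1 : ε * (v * (w - x)) ≤ v ^ 2 * (g w - (f x + m * (w - x))) :=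
      hslope w hw hwx ▸ mul_le_mul_of_nonneg_right (hεle w hw hwx) hP.le
    have h2 : ε / v * (w - x) * v ^ 2 = ε * (v * (w - x)) := by field_simp
    nlinarith [(by positivity : (0 : ℝ) < v ^ 2)]

theorem sub_mul_nonpos_of_isolated_contact (hf : IsConvexEnvelopeOn (Icc a b) g f)
    (hg : ContinuousOn g (Icc a b)) {x y m d : ℝ} (hx : x ∈ Icc a b)
    (hgx : HasDerivWithinAt g d (Icc a b) x) (hm : IsSupportSlope (Icc a b) f x m)
    (hfx : f x = g x)
    (hiso : ∀ w ∈ Icc a b, 0 < (y - x) * (w - x) → g w ≠ f x + m * (w - x))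
    (ha : x = a → ∀ m', IsSupportSlope (Icc a b) f a m' → m' ≤ m)
    (hb : x = b → ∀ m', IsSupportSlope (Icc a b) f b m' → m ≤ m') :
    (d - m) * (y - x) ≤ 0 := by
  by_contra! hd
  have hℓ : ∀ w ∈ Icc a b, f x + m * (w - x) ≤ g w := fun w hw => (hm w hw).trans (hf.le w hw)
  by_cases hside : ∀ w ∈ Icc a b, 0 ≤ (y - x) * (w - x)
  · -- all of `[a, b]` lies on the side of `y`, so `x` is an endpoint and `m` cannot be steepened
    have hyx : y ≠ x := by rintro rfl; simp at hd
    obtain ⟨m', hm'm, hm'⟩ := hf.exists_steeper_isSupportSlope hg hx hgx hfx hside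
      (fun w hw hwx => (hℓ w hw).lt_of_ne (hiso w hw ((hside w hw).lt_of_ne
        (mul_ne_zero (sub_ne_zero.2 hyx) (sub_ne_zero.2 hwx)).symm)).symm)
      (by linarith [mul_comm (d - m) (y - x)])
    have hab : a ≤ b := hx.1.trans hx.2
    rcases hyx.lt_or_gt with hyx | hxy
    · have hxb : x = b := le_antisymm hx.2 (by nlinarith [hside b (right_mem_Icc.2 hab)])
      have := hb hxb m' (hxb ▸ hm')
      nlinarith
    · have hxa : x = a := le_antisymm (by nlinarith [hside a (left_mem_Icc.2 hab)]) hx.1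
      have := ha hxa m' (hxa ▸ hm')
      nlinarith
  · push Not at hside
    obtain ⟨w, hw, hwx⟩ := hside
    have := sub_mul_nonneg_of_affine_le (convex_Icc a b) hx hw hgx hℓ (by rw [hfx]; ring)
    nlinarith [mul_neg_of_pos_of_neg hd hwx, mul_nonneg this (sq_nonneg (y - x))]

theorem le_quadratic (hf : IsConvexEnvelopeOn (Icc a b) g f)
    (hg : ∀ x ∈ Icc a b, HasDerivWithinAt g (g' x) (Icc a b) x)
    (hM : LipschitzOnWith M g' (Icc a b)) {x y m : ℝ} (hx : x ∈ Icc a b) (hy : y ∈ Icc a b)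
    (hm : IsSupportSlope (Icc a b) f x m)
    (ha : x = a → ∀ m', IsSupportSlope (Icc a b) f a m' → m' ≤ m)
    (hb : x = b → ∀ m', IsSupportSlope (Icc a b) f b m' → m ≤ m') :
    f y ≤ f x + m * (y - x) + M / 2 * (y - x) ^ 2 := by
  have hgc : ContinuousOn g (Icc a b) := fun z hz => (hg z hz).continuousWithinAt
  have hℓ : ∀ w ∈ Icc a b, f x + m * (w - x) ≤ g w := fun w hw => (hm w hw).trans (hf.le w hw)
  obtain ⟨z, hz, hzside, hzc, hzmax⟩ := hf.exists_extremal_contact hgc hx hy hℓ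
  have hfz : f z = f x + m * (z - x) := le_antisymm (hzc ▸ hf.le z hz) (hm z hz)
  have hM0 : (0 : ℝ) ≤ M / 2 * (y - x) ^ 2 := by positivity
  rcases le_or_gt ((y - x) * (y - z)) 0 with hyz | hyz
  · -- `y` lies between `x` and `z`, where `f` coincides with its supporting line
    have hseg : y ∈ segment ℝ x z := by
      rcases lt_trichotomy x y with hxy | rfl | hxy
      · rw [segment_eq_uIcc, mem_uIcc]
        exact Or.inl ⟨hxy.le, by nlinarith⟩
      · exact left_mem_segment ℝ _ _
      · rw [segment_eq_uIcc, mem_uIcc]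
        exact Or.inr ⟨by nlinarith, hxy.le⟩
    have hconv : ConvexOn ℝ (Icc a b) fun w => f w - (f x + m * (w - x)) :=
      hf.convexOn.sub ⟨convex_Icc a b, fun _ _ _ _ _ _ _ _ hpq => le_of_eq (by
        simp only [smul_eq_mul]; linear_combination (f x - m * x) * hpq)⟩
    have := hconv.le_on_segment hx hz hseg
    simp only [sub_self, mul_zero, add_zero, hfz, max_self] at this
    linarith
  · have htan : (g' z - m) * (y - z) ≤ 0 := by
      rcases eq_or_ne z x with rfl | hzx
      · exact hf.sub_mul_nonpos_of_isolated_contact hgc hz (hg z hz) hm (by simpa using hzc.symm)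
          (fun w hw hw' hwc => by nlinarith [hzmax w hw hw'.le hwc]) ha hb
      · have htan := sub_mul_nonneg_of_affine_le (convex_Icc a b) hz hx (hg z hz) hℓ hzc
        have hyx : y ≠ x := by rintro rfl; simp at hyz
        have hzx' : 0 < (y - x) * (z - x) :=
          hzside.lt_of_ne (mul_ne_zero (sub_ne_zero.2 hyx) (sub_ne_zero.2 hzx)).symm
        have hopp : (x - z) * (y - z) < 0 := by nlinarith [mul_pos hzx' hyz, sq_nonneg (y - x)]
        nlinarith [mul_nonneg htan (sq_nonneg (y - z))]
    have hsq : (y - z) ^ 2 ≤ (y - x) ^ 2 := by nlinarith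
    have ht := le_quadratic_of_lipschitzOnWith (convex_Icc a b) hg hM hz hy
    calc f y ≤ g y := hf.le y hy
      _ ≤ g z + g' z * (y - z) + M / 2 * (y - z) ^ 2 := ht
      _ ≤ f x + m * (y - x) + M / 2 * (y - x) ^ 2 := by
        rw [hzc]
        nlinarith [mul_le_mul_of_nonneg_left hsq (by positivity : (0 : ℝ) ≤ M / 2)]

end IsConvexEnvelopeOn

theorem stmt3 (a b : ℝ) (hab : a < b) (g g' : ℝ → ℝ) (M : NNReal)
    (hg : ∀ x ∈ Set.Icc a b, HasDerivWithinAt g (g' x) (Set.Icc a b) x)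
    (hM : LipschitzOnWith M g' (Set.Icc a b)) :
    ∃ m : ℝ → ℝ,
      (∀ u ∈ Set.Icc a b, HasDerivWithinAt (convEnv a b g) (m u) (Set.Icc a b) u) ∧
      LipschitzOnWith M m (Set.Icc a b) := by
  have hgc : ContinuousOn g (Icc a b) := fun x hx => (hg x hx).continuousWithinAt
  have hf := isConvexEnvelopeOn_convEnv (isCompact_Icc.bddBelow_image hgc)
  set f := convEnv a b g
  have hm : ∀ x ∈ Icc a b, IsSupportSlope (Icc a b) f x (supportSlope a b f x) :=
    fun x hx => isSupportSlope_supportSlope hf.convexOn (hf.isSupportSlope_left hab.le hg hM)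
      (hf.isSupportSlope_right hab.le hg hM) hx
  have hquad : ∀ x ∈ Icc a b, ∀ y ∈ Icc a b,
      f y ≤ f x + supportSlope a b f x * (y - x) + M / 2 * (y - x) ^ 2 :=
    fun x hx y hy => hf.le_quadratic hg hM hx hy (hm x hx)
      (fun hxa _ h => hxa ▸ le_supportSlope_left hab h)
      (fun hxb _ h => hxb ▸ supportSlope_right_le hab h)
  exact ⟨supportSlope a b f, fun u hu => (hm u hu).hasDerivWithinAt (hquad u hu),
    lipschitzOnWith_of_isSupportSlope hm hquad⟩
end

section
/- Let g, h : ℝ → ℝ be C¹ functions and a < b. Then the L¹-norm of the difference of the derivatives of the convex envelopes is bounded by the L¹-norm of the difference of the derivatives: ∫_a^b |(conv_{[a,b]} g)'(τ) − (conv_{[a,b]} h)'(τ)| dτ ≤ ∫_a^b |g'(τ) − h'(τ)| dτ. -/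
/-!
Write `G`, `H` for the convex envelopes of `g`, `h`. They agree with `g`, `h` at `a` and `b`, so
by `|x - y| = 2 max x y - x - y` it suffices to show `∫ max G' H' ≤ W b - W a`, where `W` is a
primitive of `max g' h'`. Since `W - g` is nondecreasing, `G'` is bounded by the right derivative
of the envelope of `W`: if some secant slope `σ` of that envelope issuing from `x` were below
`G' x`, then for `σ < s < G' x` every minimiser of `g - s·id` lies left of `x`, while `W - s·id`
dips, right of `x`, below all its values left of `x`, contradicting the monotonicity of `W - g`.
The same holds for `H`, and the right derivative of the (Lipschitz) envelope of `W` integrates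
to `W b - W a`.
-/

open Set

open MeasureTheory intervalIntegral

theorem ConvexOn.monotoneOn_of_hasDerivWithinAt {S : Set ℝ} {f f' : ℝ → ℝ}
    (hfc : ConvexOn ℝ S f) (hf : ∀ x ∈ S, HasDerivWithinAt f (f' x) S x) : MonotoneOn f' S := by
  intro x hx y hy hxy
  rcases hxy.eq_or_lt with rfl | hxy
  · rfl
  exact (hfc.le_slope_of_hasDerivWithinAt hx hy hxy (hf x hx)).trans
    (hfc.slope_le_of_hasDerivWithinAt hx hy hxy (hf y hy))

theorem intervalIntegral.integral_abs_sub_eq {a b : ℝ} {u v : ℝ → ℝ}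
    (hu : IntervalIntegrable u volume a b) (hv : IntervalIntegrable v volume a b) :
    ∫ x in a..b, |u x - v x| =
      2 * (∫ x in a..b, max (u x) (v x)) - (∫ x in a..b, u x) - ∫ x in a..b, v x := by
  have hmax : IntervalIntegrable (fun x => max (u x) (v x)) volume a b :=
    ⟨hu.1.sup hv.1, hu.2.sup hv.2⟩
  rw [← integral_const_mul, ← integral_sub (hmax.const_mul 2) hu, ← integral_sub _ hv]
  · congr 1
    ext x
    rcases le_total (u x) (v x) with h | h
    · rw [max_eq_right h, abs_of_nonpos (sub_nonpos.2 h)]; ring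
    · rw [max_eq_left h, abs_of_nonneg (sub_nonneg.2 h)]; ring
  · exact (hmax.const_mul 2).sub hu

section ConvexEnvelope

variable {a b : ℝ} {f : ℝ → ℝ}

theorem le_convEnv_s8 {φ : ℝ → ℝ} (hφ : ConvexOn ℝ (Icc a b) φ)
    (hφf : ∀ z ∈ Icc a b, φ z ≤ f z) {x : ℝ} (hx : x ∈ Icc a b) : φ x ≤ convEnv a b f x :=
  le_csSup ⟨f x, by rintro _ ⟨ψ, -, hψ, rfl⟩; exact hψ x hx⟩ ⟨φ, hφ, hφf, rfl⟩

theorem affine_le_convEnv {c s x₀ : ℝ} (h : ∀ z ∈ Icc a b, c + s * (z - x₀) ≤ f z) {x : ℝ}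
    (hx : x ∈ Icc a b) : c + s * (x - x₀) ≤ convEnv a b f x := by
  refine le_convEnv_s8 ⟨convex_Icc a b, fun _ _ _ _ _ _ _ _ hst => le_of_eq ?_⟩ h hx
  simp only [smul_eq_mul]
  linear_combination (s * x₀ - c) * hst

theorem convEnv_le_of_forall_s8 (hf : BddBelow (f '' Icc a b)) {x c : ℝ}
    (h : ∀ φ, ConvexOn ℝ (Icc a b) φ → (∀ z ∈ Icc a b, φ z ≤ f z) → φ x ≤ c) :
    convEnv a b f x ≤ c := by
  obtain ⟨c₀, hc₀⟩ := hf
  refine csSup_le ⟨c₀, fun _ => c₀, convexOn_const c₀ (convex_Icc a b),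
    fun z hz => hc₀ ⟨z, hz, rfl⟩, rfl⟩ ?_
  rintro _ ⟨φ, hφ, hφf, rfl⟩
  exact h φ hφ hφf

theorem convEnv_le (hf : BddBelow (f '' Icc a b)) {x : ℝ} (hx : x ∈ Icc a b) :
    convEnv a b f x ≤ f x :=
  convEnv_le_of_forall_s8 hf fun _ _ hφf => hφf x hx

theorem convexOn_convEnv (hf : BddBelow (f '' Icc a b)) :
    ConvexOn ℝ (Icc a b) (convEnv a b f) := by
  refine ⟨convex_Icc a b, fun x hx y hy s t hs ht hst => convEnv_le_of_forall_s8 hf fun φ hφ hφf => ?_⟩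
  calc φ (s • x + t • y) ≤ s • φ x + t • φ y := hφ.2 hx hy hs ht hst
    _ ≤ s • convEnv a b f x + t • convEnv a b f y := by
      gcongr
      exacts [le_convEnv_s8 hφ hφf hx, le_convEnv_s8 hφ hφf hy]

section Lipschitz

variable {K : NNReal}

theorem LipschitzOnWith.sub_mul_le_convEnv_left (hf : LipschitzOnWith K f (Icc a b)) {x : ℝ}
    (hx : x ∈ Icc a b) : f a - K * (x - a) ≤ convEnv a b f x := by
  have ha : a ∈ Icc a b := left_mem_Icc.2 (hx.1.trans hx.2)
  have := affine_le_convEnv (f := f) (c := f a) (s := -K) (x₀ := a) (fun z hz => ?_) hx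
  · linarith
  · have := hf.le_add_mul ha hz
    rw [Real.dist_eq, abs_of_nonpos (sub_nonpos.2 hz.1)] at this
    linarith

theorem LipschitzOnWith.sub_mul_le_convEnv_right (hf : LipschitzOnWith K f (Icc a b)) {x : ℝ}
    (hx : x ∈ Icc a b) : f b - K * (b - x) ≤ convEnv a b f x := by
  have hb : b ∈ Icc a b := right_mem_Icc.2 (hx.1.trans hx.2)
  have := affine_le_convEnv (f := f) (c := f b) (s := K) (x₀ := b) (fun z hz => ?_) hx
  · linarith
  · have := hf.le_add_mul hb hz
    rw [Real.dist_eq, abs_of_nonneg (sub_nonneg.2 hz.2)] at this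
    linarith

theorem LipschitzOnWith.convEnv_left_eq (hf : LipschitzOnWith K f (Icc a b)) (hab : a ≤ b) :
    convEnv a b f a = f a := by
  have ha := left_mem_Icc.2 hab
  refine le_antisymm (convEnv_le (isCompact_Icc.bddBelow_image hf.continuousOn) ha) ?_
  simpa using hf.sub_mul_le_convEnv_left ha

theorem LipschitzOnWith.convEnv_right_eq (hf : LipschitzOnWith K f (Icc a b)) (hab : a ≤ b) :
    convEnv a b f b = f b := by
  have hb := right_mem_Icc.2 hab
  refine le_antisymm (convEnv_le (isCompact_Icc.bddBelow_image hf.continuousOn) hb) ?_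
  simpa using hf.sub_mul_le_convEnv_right hb

theorem lipschitzOnWith_convEnv (hf : LipschitzOnWith K f (Icc a b)) :
    LipschitzOnWith K (convEnv a b f) (Icc a b) := by
  have hE := convexOn_convEnv (isCompact_Icc.bddBelow_image hf.continuousOn)
  -- Secant slopes are squeezed between the slopes to the endpoints, where the envelope meets `f`.
  have upper : ∀ x ∈ Icc a b, ∀ y ∈ Icc a b, x < y →
      convEnv a b f y - convEnv a b f x ≤ K * (y - x) := by
    intro x hx y hy hxy
    have hab := hx.1.trans hx.2
    have hslope : (convEnv a b f y - convEnv a b f x) / (y - x) ≤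
        (convEnv a b f b - convEnv a b f x) / (b - x) := by
      rcases hy.2.eq_or_lt with rfl | hyb
      · rfl
      exact hE.secant_mono hx hy (right_mem_Icc.2 hab) hxy.ne' (hxy.trans hyb).ne' hyb.le
    have hend : convEnv a b f b - convEnv a b f x ≤ K * (b - x) := by
      linarith [hf.convEnv_right_eq hab, hf.sub_mul_le_convEnv_right hx]
    have := hslope.trans ((div_le_iff₀ (sub_pos.2 (hxy.trans_le hy.2))).2 hend)
    rwa [div_le_iff₀ (sub_pos.2 hxy)] at this
  have lower : ∀ x ∈ Icc a b, ∀ y ∈ Icc a b, x < y →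
      convEnv a b f x - convEnv a b f y ≤ K * (y - x) := by
    intro x hx y hy hxy
    have hab := hx.1.trans hx.2
    have hslope : (convEnv a b f a - convEnv a b f y) / (a - y) ≤
        (convEnv a b f x - convEnv a b f y) / (x - y) := by
      rcases hx.1.eq_or_lt with rfl | hax
      · rfl
      exact hE.secant_mono hy (left_mem_Icc.2 hab) hx (hax.trans hxy).ne hxy.ne hax.le
    have hend : convEnv a b f a - convEnv a b f y ≤ -K * (a - y) := by
      linarith [hf.convEnv_left_eq hab, hf.sub_mul_le_convEnv_left hy]
    have := ((le_div_iff_of_neg (sub_neg.2 (hx.1.trans_lt hxy))).2 hend).trans hslope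
    rw [le_div_iff_of_neg (sub_neg.2 hxy)] at this
    linarith
  refine .of_le_add_mul K fun x hx y hy => ?_
  rcases lt_trichotomy x y with h | rfl | h
  · rw [Real.dist_eq, abs_of_neg (sub_neg.2 h)]; linarith [lower x hx y hy h]
  · simp
  · rw [Real.dist_eq, abs_of_pos (sub_pos.2 h)]; linarith [upper y hy x hx h]

end Lipschitz

end ConvexEnvelope

section Comparison

variable {a b x y p s : ℝ} {U V : ℝ → ℝ}

theorem exists_le_isMinOn_of_hasDerivWithinAt_convEnv (hU : ContinuousOn U (Icc a b))
    (hx : x ∈ Icc a b) (hp : HasDerivWithinAt (convEnv a b U) p (Icc a b) x) (hs : s < p) :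
    ∃ t ∈ Icc a b, t ≤ x ∧ IsMinOn (fun z => U z - s * z) (Icc a b) t := by
  have hbdd := isCompact_Icc.bddBelow_image hU
  obtain ⟨t, ht, hmin⟩ : ∃ t ∈ Icc a b, IsMinOn (fun z => U z - s * z) (Icc a b) t :=
    isCompact_Icc.exists_isMinOn ⟨x, hx⟩ (hU.sub (continuousOn_const.mul continuousOn_id))
  refine ⟨t, ht, not_lt.1 fun hxt => ?_, hmin⟩
  have hline : U t + s * (x - t) ≤ convEnv a b U x := by
    refine affine_le_convEnv (fun z hz => ?_) hx
    have : U t - s * t ≤ U z - s * z := hmin hz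
    linarith
  have hslope := (convexOn_convEnv hbdd).le_slope_of_hasDerivWithinAt hx ht hxt hp
  rw [slope_def_field, le_div_iff₀ (sub_pos.2 hxt)] at hslope
  linarith [convEnv_le hbdd ht, mul_lt_mul_of_pos_right hs (sub_pos.2 hxt)]

theorem exists_gt_forall_le_lt_of_slope_convEnv_lt (hV : ContinuousOn V (Icc a b))
    (hx : x ∈ Icc a b) (hy : y ∈ Icc a b) (hxy : x < y) (hs : slope (convEnv a b V) x y < s) :
    ∃ t₂ ∈ Icc a b, x < t₂ ∧ ∀ t ∈ Icc a b, t ≤ x → V t₂ - s * t₂ < V t - s * t := by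
  have hbdd := isCompact_Icc.bddBelow_image hV
  have hleft : ∀ t ∈ Icc a b, t ≤ x →
      convEnv a b V x - s * x ≤ V t - s * t := by
    intro t ht htx
    rcases htx.eq_or_lt with rfl | htx
    · linarith [convEnv_le hbdd ht]
    have h := (convexOn_convEnv hbdd).slope_mono_adjacent ht hy htx hxy
    rw [slope_def_field] at hs
    have := (div_lt_iff₀ (sub_pos.2 htx)).1 (h.trans_lt hs)
    linarith [convEnv_le hbdd ht]
  -- Otherwise the line of slope `s` through `(x, convEnv a b V x)` would be a minorant of `V`
  -- lying above the envelope at `y`.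
  obtain ⟨t₂, ht₂, hlt⟩ : ∃ t₂ ∈ Icc a b, V t₂ - s * t₂ < convEnv a b V x - s * x := by
    by_contra! h
    have := affine_le_convEnv (f := V) (c := convEnv a b V x) (s := s) (x₀ := x)
      (fun z hz => by linarith [h z hz]) hy
    rw [slope_def_field, div_lt_iff₀ (sub_pos.2 hxy)] at hs
    linarith
  exact ⟨t₂, ht₂, not_le.1 fun h => (hlt.trans_le (hleft t₂ ht₂ h)).false,
    fun t ht htx => hlt.trans_le (hleft t ht htx)⟩

theorem le_slope_convEnv_of_monotoneOn_sub (hU : ContinuousOn U (Icc a b))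
    (hV : ContinuousOn V (Icc a b)) (hUV : MonotoneOn (V - U) (Icc a b)) (hx : x ∈ Icc a b)
    (hy : y ∈ Icc a b) (hxy : x < y) (hp : HasDerivWithinAt (convEnv a b U) p (Icc a b) x) :
    p ≤ slope (convEnv a b V) x y := by
  by_contra! h
  set σ := slope (convEnv a b V) x y
  obtain ⟨t₁, ht₁, ht₁x, hmin⟩ := exists_le_isMinOn_of_hasDerivWithinAt_convEnv hU hx hp
    (s := (σ + p) / 2) (by linarith)
  obtain ⟨t₂, ht₂, hxt₂, hlt⟩ := exists_gt_forall_le_lt_of_slope_convEnv_lt hV hx hy hxy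
    (s := (σ + p) / 2) (by linarith)
  have hmono := hUV ht₁ ht₂ (ht₁x.trans hxt₂.le)
  have hmin₂ : U t₁ - (σ + p) / 2 * t₁ ≤ U t₂ - (σ + p) / 2 * t₂ := hmin ht₂
  simp only [Pi.sub_apply] at hmono
  linarith [hlt t₁ ht₁ ht₁x]

theorem le_rightDeriv_convEnv_of_monotoneOn_sub (hU : ContinuousOn U (Icc a b))
    (hV : ContinuousOn V (Icc a b)) (hUV : MonotoneOn (V - U) (Icc a b)) (hx : x ∈ Ioo a b)
    (hp : HasDerivWithinAt (convEnv a b U) p (Icc a b) x) :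
    p ≤ derivWithin (convEnv a b V) (Ioi x) x := by
  rw [(convexOn_convEnv (isCompact_Icc.bddBelow_image hV)).rightDeriv_eq_sInf_slope_of_mem_interior
    (by rwa [interior_Icc])]
  refine le_csInf ⟨_, mem_image_of_mem _ ⟨right_mem_Icc.2 (hx.1.trans hx.2).le, hx.2⟩⟩ ?_
  rintro _ ⟨y, ⟨hy, hxy⟩, rfl⟩
  exact le_slope_convEnv_of_monotoneOn_sub hU hV hUV (Ioo_subset_Icc_self hx) hy hxy hp

end Comparison

section Integrals

variable {a b : ℝ} {f m : ℝ → ℝ}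

theorem monotoneOn_of_hasDerivWithinAt_convEnv (hf : ContinuousOn f (Icc a b))
    (hm : ∀ u ∈ Icc a b, HasDerivWithinAt (convEnv a b f) (m u) (Icc a b) u) :
    MonotoneOn m (Icc a b) :=
  (convexOn_convEnv (isCompact_Icc.bddBelow_image hf)).monotoneOn_of_hasDerivWithinAt hm

theorem intervalIntegrable_of_hasDerivWithinAt_convEnv (hf : ContinuousOn f (Icc a b))
    (hab : a ≤ b) (hm : ∀ u ∈ Icc a b, HasDerivWithinAt (convEnv a b f) (m u) (Icc a b) u) :
    IntervalIntegrable m volume a b :=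
  MonotoneOn.intervalIntegrable (by
    rw [uIcc_of_le hab]; exact monotoneOn_of_hasDerivWithinAt_convEnv hf hm)

theorem integral_eq_sub_of_hasDerivWithinAt_convEnv {K : NNReal}
    (hf : LipschitzOnWith K f (Icc a b)) (hab : a ≤ b)
    (hm : ∀ u ∈ Icc a b, HasDerivWithinAt (convEnv a b f) (m u) (Icc a b) u) :
    ∫ u in a..b, m u = f b - f a := by
  rw [integral_eq_sub_of_hasDeriv_right_of_le hab (fun u hu => (hm u hu).continuousWithinAt)
    (fun u hu => (hm u (Ioo_subset_Icc_self hu)).mono_of_mem_nhdsWithin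
      (Icc_mem_nhdsGT_of_mem ⟨hu.1.le, hu.2⟩))
    (intervalIntegrable_of_hasDerivWithinAt_convEnv hf.continuousOn hab hm),
    hf.convEnv_left_eq hab, hf.convEnv_right_eq hab]

theorem integral_max_le_of_monotoneOn_sub {U₁ U₂ V m₁ m₂ : ℝ → ℝ} {K : NNReal} (hab : a ≤ b)
    (hU₁ : ContinuousOn U₁ (Icc a b)) (hU₂ : ContinuousOn U₂ (Icc a b))
    (hV : LipschitzOnWith K V (Icc a b))
    (hVU₁ : MonotoneOn (V - U₁) (Icc a b)) (hVU₂ : MonotoneOn (V - U₂) (Icc a b))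
    (hm₁ : ∀ u ∈ Icc a b, HasDerivWithinAt (convEnv a b U₁) (m₁ u) (Icc a b) u)
    (hm₂ : ∀ u ∈ Icc a b, HasDerivWithinAt (convEnv a b U₂) (m₂ u) (Icc a b) u) :
    ∫ u in a..b, max (m₁ u) (m₂ u) ≤ V b - V a := by
  have hmono : MonotoneOn (fun u => max (m₁ u) (m₂ u)) (Icc a b) := fun x hx y hy hxy =>
    max_le_max (monotoneOn_of_hasDerivWithinAt_convEnv hU₁ hm₁ hx hy hxy)
      (monotoneOn_of_hasDerivWithinAt_convEnv hU₂ hm₂ hx hy hxy)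
  have hEV := convexOn_convEnv (isCompact_Icc.bddBelow_image hV.continuousOn)
  have := integral_le_sub_of_hasDeriv_right_of_le hab (lipschitzOnWith_convEnv hV).continuousOn
    (fun x hx => hEV.hasDerivWithinAt_rightDeriv_of_mem_interior (by rwa [interior_Icc]))
    (hmono.integrableOn_isCompact isCompact_Icc) fun x hx => max_le
      (le_rightDeriv_convEnv_of_monotoneOn_sub hU₁ hV.continuousOn hVU₁ hx
        (hm₁ x (Ioo_subset_Icc_self hx)))
      (le_rightDeriv_convEnv_of_monotoneOn_sub hU₂ hV.continuousOn hVU₂ hx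
        (hm₂ x (Ioo_subset_Icc_self hx)))
  rwa [hV.convEnv_left_eq hab, hV.convEnv_right_eq hab] at this

end Integrals

theorem exists_contDiff_monotone_sub {g h : ℝ → ℝ} (hg : ContDiff ℝ 1 g) (hh : ContDiff ℝ 1 h)
    (a b : ℝ) : ∃ W : ℝ → ℝ, ContDiff ℝ 1 W ∧ Monotone (W - g) ∧ Monotone (W - h) ∧
      W b - W a = ∫ τ in a..b, max (deriv g τ) (deriv h τ) := by
  set w := fun τ => max (deriv g τ) (deriv h τ)
  have hw : Continuous w := (hg.continuous_deriv le_rfl).max (hh.continuous_deriv le_rfl)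
  have hW : ∀ x, HasDerivAt (fun x => ∫ τ in a..x, w τ) (w x) x :=
    fun x => (hw.integral_hasStrictDerivAt a x).hasDerivAt
  have hmono : ∀ f : ℝ → ℝ, ContDiff ℝ 1 f → (∀ x, deriv f x ≤ w x) →
      Monotone ((fun x => ∫ τ in a..x, w τ) - f) := fun f hf hfw =>
    monotone_of_deriv_nonneg (fun x => ((hW x).sub (hf.differentiable one_ne_zero x).hasDerivAt
      ).differentiableAt) fun x => by
        rw [((hW x).sub (hf.differentiable one_ne_zero x).hasDerivAt).deriv]
        linarith [hfw x]
  refine ⟨fun x => ∫ τ in a..x, w τ, contDiff_one_iff_deriv.2 ⟨fun x => (hW x).differentiableAt,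
    ?_⟩, hmono g hg fun x => le_max_left _ _, hmono h hh fun x => le_max_right _ _, by simp⟩
  rwa [show deriv _ = w from funext fun x => (hW x).deriv]

theorem stmt8 (a b : ℝ) (hab : a < b) (g h : ℝ → ℝ)
    (hg : ContDiff ℝ 1 g) (hh : ContDiff ℝ 1 h) (m₁ m₂ : ℝ → ℝ)
    (hm₁ : ∀ u ∈ Set.Icc a b,
      HasDerivWithinAt (convEnv a b g) (m₁ u) (Set.Icc a b) u)
    (hm₂ : ∀ u ∈ Set.Icc a b,
      HasDerivWithinAt (convEnv a b h) (m₂ u) (Set.Icc a b) u) :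
    (∫ τ in a..b, |m₁ τ - m₂ τ|) ≤ ∫ τ in a..b, |deriv g τ - deriv h τ| := by
  have lipschitz {f : ℝ → ℝ} (hf : ContDiff ℝ 1 f) : ∃ K, LipschitzOnWith K f (Icc a b) :=
    hf.contDiffOn.exists_lipschitzOnWith one_ne_zero (convex_Icc a b) isCompact_Icc
  have ftc {f : ℝ → ℝ} (hf : ContDiff ℝ 1 f) : ∫ τ in a..b, deriv f τ = f b - f a :=
    integral_deriv_eq_sub (fun x _ => hf.differentiable one_ne_zero x)
      ((hf.continuous_deriv le_rfl).intervalIntegrable a b)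
  obtain ⟨Kg, hKg⟩ := lipschitz hg
  obtain ⟨Kh, hKh⟩ := lipschitz hh
  obtain ⟨W, hW, hWg, hWh, hWab⟩ := exists_contDiff_monotone_sub hg hh a b
  obtain ⟨KW, hKW⟩ := lipschitz hW
  have hmax := integral_max_le_of_monotoneOn_sub hab.le hKg.continuousOn hKh.continuousOn hKW
    (hWg.monotoneOn _) (hWh.monotoneOn _) hm₁ hm₂
  rw [integral_abs_sub_eq
      (intervalIntegrable_of_hasDerivWithinAt_convEnv hKg.continuousOn hab.le hm₁)
      (intervalIntegrable_of_hasDerivWithinAt_convEnv hKh.continuousOn hab.le hm₂),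
    integral_abs_sub_eq ((hg.continuous_deriv le_rfl).intervalIntegrable a b)
      ((hh.continuous_deriv le_rfl).intervalIntegrable a b),
    integral_eq_sub_of_hasDerivWithinAt_convEnv hKg hab.le hm₁,
    integral_eq_sub_of_hasDerivWithinAt_convEnv hKh hab.le hm₂, ftc hg, ftc hh]
  linarith
end

section
/- Let g : ℝ → ℝ be C^{1,1}, let [a,b] ⊆ ℝ and ū ∈ [a,b] be a point where conv_{[a,b]} g (ū) = g(ū). Then for all u ∈ [a, ū] with u < ū, the secant slope of g over [u, ū] is at most the secant slope over [u, b]: (g(ū) − g(u))/(ū − u) ≤ (g(b) − g(u))/(b − u); and for all u ∈ [ū, b] with ū < u, (g(u) − g(ū))/(u − ū) ≥ (g(u) − g(a))/(u − a). -/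
open Set

/- Boundedness below makes the set of convex minorants nonempty (it contains a constant);
otherwise `sSup` would be the junk value `0`. -/
lemma convEnv_le_chord {g : ℝ → ℝ} {a b : ℝ} (hbdd : BddBelow (g '' Icc a b))
    {x y : ℝ} (hx : x ∈ Icc a b) (hy : y ∈ Icc a b)
    {s t : ℝ} (hs : 0 ≤ s) (ht : 0 ≤ t) (hst : s + t = 1) :
    convEnv a b g (s * x + t * y) ≤ s * g x + t * g y := by
  obtain ⟨c, hc⟩ := hbdd
  apply csSup_le
  · exact ⟨c, fun _ => c, convexOn_const c (convex_Icc a b),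
      fun z hz => hc (mem_image_of_mem g hz), rfl⟩
  · rintro _ ⟨h, hconv, hle, rfl⟩
    calc h (s * x + t * y) ≤ s * h x + t * h y := hconv.2 hx hy hs ht hst
      _ ≤ s * g x + t * g y := by gcongr <;> exact hle _ ‹_›

lemma le_chord_of_convEnv_eq {g : ℝ → ℝ} {a b ubar : ℝ} (hbdd : BddBelow (g '' Icc a b))
    (hcontact : convEnv a b g ubar = g ubar) {x y : ℝ} (hx : x ∈ Icc a b) (hy : y ∈ Icc a b)
    (hxu : x ≤ ubar) (huy : ubar ≤ y) :
    (y - x) * g ubar ≤ (y - ubar) * g x + (ubar - x) * g y := by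
  rcases hxu.eq_or_lt with rfl | hxu
  · simp
  have hyx : 0 < y - x := by linarith
  have hcomb : (y - ubar) / (y - x) * x + (ubar - x) / (y - x) * y = ubar := by
    field_simp; ring
  have hchord := convEnv_le_chord hbdd hx hy (s := (y - ubar) / (y - x))
    (t := (ubar - x) / (y - x)) (by bound) (by bound) (by field_simp; ring)
  rw [hcomb, hcontact, ← mul_le_mul_iff_right₀ hyx] at hchord
  calc (y - x) * g ubar ≤ _ := hchord
    _ = (y - ubar) * g x + (ubar - x) * g y := by field_simp

theorem stmt10_general (g : ℝ → ℝ) (hg : Differentiable ℝ g) (a b ubar : ℝ)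
    (hub : ubar ∈ Set.Icc a b)
    (hcontact : convEnv a b g ubar = g ubar) :
    (∀ u ∈ Set.Icc a ubar, u < ubar →
        (g ubar - g u) / (ubar - u) ≤ (g b - g u) / (b - u)) ∧
    (∀ u ∈ Set.Icc ubar b, ubar < u →
        (g u - g a) / (u - a) ≤ (g u - g ubar) / (u - ubar)) := by
  obtain ⟨ha, hb⟩ := hub
  have hbdd : BddBelow (g '' Icc a b) := (isCompact_Icc.image hg.continuous).bddBelow
  constructor
  · rintro u ⟨hau, hu⟩ hlt
    have := le_chord_of_convEnv_eq hbdd hcontact ⟨hau, hu.trans hb⟩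
      (right_mem_Icc.2 (ha.trans hb)) hu hb
    rw [div_le_div_iff₀ (by linarith) (by linarith)]
    linarith
  · rintro u ⟨hu, hub⟩ hlt
    have := le_chord_of_convEnv_eq hbdd hcontact (left_mem_Icc.2 (ha.trans hb))
      ⟨ha.trans hu, hub⟩ ha hu
    rw [div_le_div_iff₀ (by linarith) (by linarith)]
    linarith

theorem stmt10 (g : ℝ → ℝ) (M : NNReal) (hg : Differentiable ℝ g)
    (hM : LipschitzWith M (deriv g)) (a b ubar : ℝ)
    (hub : ubar ∈ Set.Icc a b)
    (hcontact : convEnv a b g ubar = g ubar) :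
    (∀ u ∈ Set.Icc a ubar, u < ubar →
        (g ubar - g u) / (ubar - u) ≤ (g b - g u) / (b - u)) ∧
    (∀ u ∈ Set.Icc ubar b, ubar < u →
        (g u - g a) / (u - a) ≤ (g u - g ubar) / (u - ubar)) :=
  stmt10_general g hg a b ubar hub hcontact
end

section
/- Let g : [a,b] → ℝ be Lipschitz and let ū ∈ [a,b] be a contact point, i.e. conv_{[a,b]} g (ū) = g(ū). Then the convex envelope of g on [a,b] restricted to [a,ū] equals the convex envelope of g restricted to [a,ū]: for all x ∈ [a,ū], conv_{[a,b]} g (x) = conv_{[a,ū]} g (x). -/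
/-!
Restricting convex minorants of `g` from `[a,b]` to `[a,ū]` gives
`conv_{[a,b]} g ≤ conv_{[a,ū]} g` on `[a,ū]`. Conversely, let `E = conv_{[a,b]} g`, which is
itself a convex minorant of `g` since `g` is bounded below. For a convex minorant `h` of `g` on
`[a,ū]`, the function equal to `max h E` on `[a,ū]` and to `E` on `[ū,b]` is convex: the two
pieces agree at `ū` because `h ū ≤ g ū = E ū`, and the left piece lies above `E`, so no slope
can decrease across `ū`. It is a convex minorant of `g` on `[a,b]`, hence lies below `E`, and
so `h ≤ E` on `[a,ū]`.
-/

open Set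

lemma div_le_add_div_add_of_div_le_div {p q r s : ℝ} (hq : 0 < q) (hs : 0 < s)
    (h : p / q ≤ r / s) : p / q ≤ (p + r) / (q + s) := by
  rw [div_le_div_iff₀ hq hs] at h
  rw [div_le_div_iff₀ hq (add_pos hq hs)]
  nlinarith

theorem ConvexOn.glue_of_le_of_eq {a b c : ℝ} {F k : ℝ → ℝ}
    (hk : ConvexOn ℝ (Icc a b) k) (hF : ConvexOn ℝ (Icc a c) F)
    (hkF : ∀ u ∈ Icc a c, k u ≤ F u) (hFc : F c = k c) :
    ConvexOn ℝ (Icc a b) (fun u => if u ≤ c then F u else k u) := by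
  set H : ℝ → ℝ := fun u => if u ≤ c then F u else k u
  have hleft : ∀ u, u ≤ c → H u = F u := fun u hu => if_pos hu
  have hright : ∀ u, c ≤ u → H u = k u := by
    intro u hu
    rcases hu.eq_or_lt with rfl | hu
    · exact (if_pos le_rfl).trans hFc
    · exact if_neg hu.not_ge
  refine convexOn_of_slope_mono_adjacent (convex_Icc a b) fun {x y z} hx hz hxy hyz => ?_
  have hax : a ≤ x := hx.1
  have hzb : z ≤ b := hz.2
  rcases le_or_gt z c with hzc | hcz
  · rw [hleft x (by linarith), hleft y (by linarith), hleft z hzc]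
    exact hF.slope_mono_adjacent ⟨hax, by linarith⟩ ⟨by linarith, hzc⟩ hxy hyz
  rcases le_or_gt c x with hcx | hxc
  · rw [hright x hcx, hright y (by linarith), hright z (by linarith)]
    exact hk.slope_mono_adjacent hx hz hxy hyz
  have hkx : k x ≤ F x := hkF x ⟨hax, hxc.le⟩
  rw [hleft x hxc.le, hright z hcz.le]
  rcases le_or_gt c y with hcy | hyc
  · rw [hright y hcy]
    calc (k y - F x) / (y - x) ≤ (k y - k x) / (y - x) := by gcongr
      _ ≤ (k z - k y) / (z - y) := hk.slope_mono_adjacent hx hz hxy hyz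
  · rw [hleft y hyc.le]
    have hac : a ≤ c := by linarith
    have hky : k y ≤ F y := hkF y ⟨by linarith, hyc.le⟩
    have hslope : (k c - F y) / (c - y) ≤ (k z - k c) / (z - c) :=
      calc (k c - F y) / (c - y) ≤ (k c - k y) / (c - y) := by gcongr
        _ ≤ (k z - k c) / (z - c) :=
          hk.slope_mono_adjacent ⟨by linarith, by linarith⟩ hz hyc hcz
    calc (F y - F x) / (y - x) ≤ (F c - F y) / (c - y) :=
          hF.slope_mono_adjacent ⟨hax, hxc.le⟩ ⟨hac, le_rfl⟩ hxy hyc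
      _ = (k c - F y) / (c - y) := by rw [hFc]
      _ ≤ ((k c - F y) + (k z - k c)) / ((c - y) + (z - c)) :=
          div_le_add_div_add_of_div_le_div (by linarith) (by linarith) hslope
      _ = (k z - F y) / (z - y) := by ring_nf

namespace convEnv

variable {a b : ℝ} {g : ℝ → ℝ}

theorem le_apply {h : ℝ → ℝ} (hh : ConvexOn ℝ (Icc a b) h) (hhg : ∀ x ∈ Icc a b, h x ≤ g x)
    {u : ℝ} (hu : u ∈ Icc a b) : h u ≤ convEnv a b g u :=
  le_csSup ⟨g u, by rintro _ ⟨h', -, hh'g, rfl⟩; exact hh'g u hu⟩ ⟨h, hh, hhg, rfl⟩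

theorem apply_le (hg : BddBelow (g '' Icc a b)) {u c : ℝ}
    (hc : ∀ h : ℝ → ℝ, ConvexOn ℝ (Icc a b) h → (∀ x ∈ Icc a b, h x ≤ g x) → h u ≤ c) :
    convEnv a b g u ≤ c := by
  obtain ⟨m, hm⟩ := hg
  refine csSup_le ⟨m, fun _ => m, convexOn_const m (convex_Icc a b),
    fun x hx => hm ⟨x, hx, rfl⟩, rfl⟩ ?_
  rintro _ ⟨h, hh, hhg, rfl⟩
  exact hc h hh hhg

theorem apply_le_self (hg : BddBelow (g '' Icc a b)) {u : ℝ} (hu : u ∈ Icc a b) :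
    convEnv a b g u ≤ g u :=
  apply_le hg fun _ _ hhg => hhg u hu

theorem convexOn (hg : BddBelow (g '' Icc a b)) : ConvexOn ℝ (Icc a b) (convEnv a b g) := by
  refine ⟨convex_Icc a b, fun x hx y hy s t hs ht hst => apply_le hg fun h hh hhg => ?_⟩
  calc h (s • x + t • y) ≤ s • h x + t • h y := hh.2 hx hy hs ht hst
    _ ≤ s • convEnv a b g x + t • convEnv a b g y := by
      gcongr
      exacts [le_apply hh hhg hx, le_apply hh hhg hy]

theorem le_of_Icc_subset {a' b' : ℝ} (hsub : Icc a' b' ⊆ Icc a b) (hg : BddBelow (g '' Icc a b))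
    {u : ℝ} (hu : u ∈ Icc a' b') : convEnv a b g u ≤ convEnv a' b' g u :=
  apply_le hg fun _ hh hhg =>
    le_apply (hh.subset hsub (convex_Icc a' b')) (fun x hx => hhg x (hsub hx)) hu

theorem le_of_apply_eq {c : ℝ} (hcb : c ≤ b) (hg : BddBelow (g '' Icc a b))
    (hc : convEnv a b g c = g c) {u : ℝ} (hu : u ∈ Icc a c) :
    convEnv a c g u ≤ convEnv a b g u := by
  have hsub : Icc a c ⊆ Icc a b := Icc_subset_Icc_right hcb
  refine apply_le (hg.mono (image_mono hsub)) fun h hh hhg => ?_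
  set E := convEnv a b g
  have hE : ConvexOn ℝ (Icc a b) E := convexOn hg
  have hmax : max (h c) (E c) = E c := max_eq_right (hc ▸ hhg c ⟨hu.1.trans hu.2, le_rfl⟩)
  have hglue := hE.glue_of_le_of_eq (hh.sup (hE.subset hsub (convex_Icc a c)))
    (fun _ _ => le_max_right _ _) hmax
  have hglue_le : ∀ x ∈ Icc a b, (if x ≤ c then max (h x) (E x) else E x) ≤ g x := by
    intro x hx
    split_ifs with hxc
    · exact max_le (hhg x ⟨hx.1, hxc⟩) (apply_le_self hg hx)
    · exact apply_le_self hg hx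
  calc h u ≤ max (h u) (E u) := le_max_left _ _
    _ = if u ≤ c then max (h u) (E u) else E u := (if_pos hu.2).symm
    _ ≤ E u := le_apply hglue hglue_le (hsub hu)

end convEnv

theorem stmt11_general (a b ubar : ℝ) (h2 : ubar ≤ b)
    (g : ℝ → ℝ) (L : NNReal) (hg : LipschitzOnWith L g (Set.Icc a b))
    (hcontact : convEnv a b g ubar = g ubar) :
    ∀ x ∈ Set.Icc a ubar, convEnv a b g x = convEnv a ubar g x := by
  intro x hx
  have hbdd : BddBelow (g '' Icc a b) := isCompact_Icc.bddBelow_image hg.continuousOn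
  exact le_antisymm (convEnv.le_of_Icc_subset (Icc_subset_Icc_right h2) hbdd hx)
    (convEnv.le_of_apply_eq h2 hbdd hcontact hx)

theorem stmt11 (a b ubar : ℝ) (h1 : a ≤ ubar) (h2 : ubar ≤ b)
    (g : ℝ → ℝ) (L : NNReal) (hg : LipschitzOnWith L g (Set.Icc a b))
    (hcontact : convEnv a b g ubar = g ubar) :
    ∀ x ∈ Set.Icc a ubar, convEnv a b g x = convEnv a ubar g x :=
  stmt11_general a b ubar h2 g L hg hcontact
end

section
/- Let g : [a,b] → ℝ be C^{1,1} with Lip(g') = M, and let [c,d] ⊆ [a,b]. Then the difference between the secant slopes (Rankine–Hugoniot speeds) of g over [c,d] and over [a,b] satisfies |(g(d) − g(c))/(d − c) − (g(b) − g(a))/(b − a)| ≤ M·((b − a) − (d − c)), interpreting the secant slope over a degenerate interval as the derivative. -/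
open Set

lemma mvt_aux14 (g : ℝ → ℝ) (hg : Differentiable ℝ g) {x y : ℝ} (hxy : x ≤ y) :
    ∃ ξ ∈ Set.Icc x y, g y - g x = deriv g ξ * (y - x) := by
  rcases eq_or_lt_of_le hxy with rfl | h
  · exact ⟨x, by simp, by simp⟩
  · obtain ⟨ξ, hξ, hd⟩ := exists_deriv_eq_slope g h hg.continuous.continuousOn
      hg.differentiableOn
    refine ⟨ξ, Ioo_subset_Icc_self hξ, ?_⟩
    rw [hd]
    field_simp [sub_ne_zero.mpr (ne_of_gt h)]

theorem stmt14 (g : ℝ → ℝ) (M : NNReal) (hg : Differentiable ℝ g)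
    (hM : LipschitzWith M (deriv g)) (a b c d : ℝ)
    (hab : a < b) (hac : a ≤ c) (hcd : c ≤ d) (hdb : d ≤ b) :
    |(if c < d then (g d - g c) / (d - c) else deriv g c) - (g b - g a) / (b - a)|
      ≤ (M : ℝ) * ((b - a) - (d - c)) := by
  -- middle interval: get ξ with the if-expression equal to deriv g ξ
  have hmid : ∃ ξ ∈ Set.Icc c d,
      (if c < d then (g d - g c) / (d - c) else deriv g c) = deriv g ξ ∧
      g d - g c = deriv g ξ * (d - c) := by
    rcases eq_or_lt_of_le hcd with rfl | h
    · exact ⟨c, by simp, by simp [lt_irrefl], by simp⟩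
    · obtain ⟨ξ, hξ, hd⟩ := exists_deriv_eq_slope g h hg.continuous.continuousOn
        hg.differentiableOn
      refine ⟨ξ, Ioo_subset_Icc_self hξ, by simp [h, hd], ?_⟩
      rw [hd]; field_simp [sub_ne_zero.mpr (ne_of_gt h)]
  obtain ⟨ξ, hξ, hif, hξeq⟩ := hmid
  obtain ⟨ξ0, hξ0, h0⟩ := mvt_aux14 g hg hac
  obtain ⟨ξ2, hξ2, h2⟩ := mvt_aux14 g hg hdb
  rw [hif]
  have hba : (0:ℝ) < b - a := by linarith
  -- Lipschitz bounds
  have lip : ∀ x y : ℝ, x ∈ Set.Icc a b → y ∈ Set.Icc a b →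
      |deriv g x - deriv g y| ≤ (M : ℝ) * (b - a) := by
    intro x y hx hy
    have := hM.dist_le_mul x y
    rw [Real.dist_eq, Real.dist_eq] at this
    have hxy : |x - y| ≤ b - a := by
      rw [abs_le]; constructor <;> [linarith [hx.1, hx.2, hy.1, hy.2];
        linarith [hx.1, hx.2, hy.1, hy.2]]
    calc |deriv g x - deriv g y| ≤ (M : ℝ) * |x - y| := this
      _ ≤ (M : ℝ) * (b - a) := by
        exact mul_le_mul_of_nonneg_left hxy M.coe_nonneg
  have hξab : ξ ∈ Set.Icc a b := ⟨le_trans hac hξ.1, le_trans hξ.2 hdb⟩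
  have hξ0ab : ξ0 ∈ Set.Icc a b := ⟨hξ0.1, le_trans hξ0.2 (le_trans hcd hdb)⟩
  have hξ2ab : ξ2 ∈ Set.Icc a b := ⟨le_trans hac (le_trans hcd hξ2.1), hξ2.2⟩
  have l0 := lip ξ ξ0 hξab hξ0ab
  have l2 := lip ξ ξ2 hξab hξ2ab
  -- rewrite the difference
  have hsum : g b - g a = deriv g ξ0 * (c - a) + deriv g ξ * (d - c)
      + deriv g ξ2 * (b - d) := by linarith
  have key : deriv g ξ - (g b - g a) / (b - a) =
      ((deriv g ξ - deriv g ξ0) * (c - a) + (deriv g ξ - deriv g ξ2) * (b - d)) / (b - a) := by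
    rw [hsum]; field_simp; ring
  rw [key, abs_div, abs_of_pos hba, div_le_iff₀ hba]
  have hca : (0:ℝ) ≤ c - a := by linarith
  have hbd : (0:ℝ) ≤ b - d := by linarith
  calc |(deriv g ξ - deriv g ξ0) * (c - a) + (deriv g ξ - deriv g ξ2) * (b - d)|
      ≤ |(deriv g ξ - deriv g ξ0) * (c - a)| + |(deriv g ξ - deriv g ξ2) * (b - d)| :=
        abs_add_le _ _
    _ = |deriv g ξ - deriv g ξ0| * (c - a) + |deriv g ξ - deriv g ξ2| * (b - d) := by
        rw [abs_mul, abs_mul, abs_of_nonneg hca, abs_of_nonneg hbd]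
    _ ≤ (M : ℝ) * (b - a) * (c - a) + (M : ℝ) * (b - a) * (b - d) := by
        gcongr
    _ = (M : ℝ) * ((b - a) - (d - c)) * (b - a) := by ring
end
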